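/- arXiv:2006.07730 — 6 statements merged into one kernel-verified Lean document; each statement's English description precedes it below -/
import Mathlib

section
/- Let K : [0,1]² → ℝ be C^{2,2} (i.e., all partial derivatives ∂_x^i ∂_y^j K with i, j ≤ 2 exist and are continuous). Suppose sup |K| ≤ d^{-γ} and all the partial derivatives ∂_x^i ∂_y^j K with i, j ≤ 2 are bounded in absolute value by 1, where d ≥ 1 and γ > 0. Then there is a constant C (depending only on γ) such that |∂_x K(x,y)| ≤ C d^{-γ/2} and |∂_x ∂_y K(x,y)| ≤ C d^{-γ/4} for all (x,y) ∈ [0,1]². -/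
/-!
Landau–Hadamard on an interval: if `|f| ≤ M₀` and `|f''| ≤ M₂` on `[a, b]`, then for every step
`0 < h ≤ b - a` one has `|f'| ≤ 2 M₀ / h + h M₂` (a mean-value slope over a window of length `h`,
corrected by the variation of `f'` across the window). With `M₀ = c ε²`, `M₂ = M` and `h = ε`
this reads `|f'| ≤ (2c + M) ε`: a bound `ε²` on a function with bounded second derivative
becomes a bound `ε` on its first derivative. Applied in `x` with `ε = d^{-γ/2}` and then in `y`
to `∂ₓK` with `ε = d^{-γ/4}`, it transfers the decay of `K` to `∂ₓK` and to `∂ₓ∂ᵧK`.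
-/

open Set

/-- Mixed partial derivative `∂_y^j ∂_x^i K` of a kernel `K : ℝ → ℝ → ℝ`. -/
noncomputable def mixedPartial (K : ℝ → ℝ → ℝ) (i j : ℕ) (x y : ℝ) : ℝ :=
  iteratedDeriv j (fun y' => iteratedDeriv i (fun x' => K x' y') x) y

lemma exists_Icc_add_subset_Icc_mem {a b h x : ℝ} (hh0 : 0 ≤ h) (hh : h ≤ b - a)
    (hx : x ∈ Icc a b) :
    ∃ c, Icc c (c + h) ⊆ Icc a b ∧ x ∈ Icc c (c + h) := by
  refine ⟨min x (b - h), Icc_subset_Icc ?_ ?_, min_le_left _ _, ?_⟩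
  · exact le_min hx.1 (by linarith)
  · linarith [min_le_right x (b - h)]
  · rcases le_total x (b - h) with hxb | hxb
    · rw [min_eq_left hxb]; linarith
    · rw [min_eq_right hxb]; linarith [hx.2]

lemma exists_mem_Icc_abs_deriv_le {f : ℝ → ℝ} (hf : Differentiable ℝ f) {c h M₀ : ℝ} (hh : 0 < h)
    (hM₀ : ∀ t ∈ Icc c (c + h), |f t| ≤ M₀) :
    ∃ ξ ∈ Icc c (c + h), |deriv f ξ| ≤ 2 * M₀ / h := by
  obtain ⟨ξ, hξ, hslope⟩ :=
    exists_deriv_eq_slope f (by linarith : c < c + h) hf.continuous.continuousOn hf.differentiableOn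
  refine ⟨ξ, Ioo_subset_Icc_self hξ, ?_⟩
  have hfc := hM₀ c (left_mem_Icc.2 (by linarith))
  have hfch := hM₀ (c + h) (right_mem_Icc.2 (by linarith))
  rw [hslope, add_sub_cancel_left, abs_div, abs_of_pos hh]
  gcongr
  calc |f (c + h) - f c| ≤ |f (c + h)| + |f c| := abs_sub _ _
    _ ≤ 2 * M₀ := by linarith

theorem abs_deriv_le_of_abs_le_of_abs_deriv_deriv_le {f : ℝ → ℝ} (hf : ContDiff ℝ 2 f)
    {a b M₀ M₂ h : ℝ} (hh : 0 < h) (hhab : h ≤ b - a)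
    (hM₀ : ∀ t ∈ Icc a b, |f t| ≤ M₀) (hM₂ : ∀ t ∈ Icc a b, |deriv (deriv f) t| ≤ M₂)
    {x : ℝ} (hx : x ∈ Icc a b) :
    |deriv f x| ≤ 2 * M₀ / h + h * M₂ := by
  obtain ⟨c, hsub, hxc⟩ := exists_Icc_add_subset_Icc_mem hh.le hhab hx
  obtain ⟨ξ, hξ, hξM⟩ := exists_mem_Icc_abs_deriv_le (hf.differentiable (by norm_num)) hh
    fun t ht => hM₀ t (hsub ht)
  have hvar : |deriv f x - deriv f ξ| ≤ M₂ * |x - ξ| := by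
    simpa only [Real.norm_eq_abs] using Convex.norm_image_sub_le_of_norm_deriv_le
      (fun t _ => hf.differentiable_deriv_two t) hM₂ (convex_Icc a b) (hsub hξ) hx
  have hxξ : |x - ξ| ≤ h := abs_sub_le_iff.2 ⟨by linarith [hxc.2, hξ.1], by linarith [hxc.1, hξ.2]⟩
  have hM₂0 : 0 ≤ M₂ := (abs_nonneg _).trans (hM₂ x hx)
  calc |deriv f x| ≤ |deriv f ξ| + |deriv f x - deriv f ξ| := by
        linarith [abs_sub_abs_le_abs_sub (deriv f x) (deriv f ξ)]
    _ ≤ 2 * M₀ / h + h * M₂ := by nlinarith [abs_nonneg (x - ξ)]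

theorem abs_deriv_le_of_abs_le_mul_sq {f : ℝ → ℝ} (hf : ContDiff ℝ 2 f)
    {a b c M ε : ℝ} (hε : 0 < ε) (hεab : ε ≤ b - a)
    (hc : ∀ t ∈ Icc a b, |f t| ≤ c * ε ^ 2) (hM : ∀ t ∈ Icc a b, |deriv (deriv f) t| ≤ M)
    {x : ℝ} (hx : x ∈ Icc a b) :
    |deriv f x| ≤ (2 * c + M) * ε := by
  have := abs_deriv_le_of_abs_le_of_abs_deriv_deriv_le hf hε hεab hc hM hx
  rwa [show 2 * (c * ε ^ 2) / ε + ε * M = (2 * c + M) * ε by field_simp] at this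

lemma rpow_neg_div_two_sq {d : ℝ} (hd : 0 ≤ d) (γ : ℝ) : (d ^ (-(γ / 2))) ^ 2 = d ^ (-γ) := by
  rw [← Real.rpow_natCast, ← Real.rpow_mul hd]
  norm_num

/-- Correlation-decay transfer: if `K` is `C^{2,2}` on `[0,1]²`, `|K| ≤ d^{-γ}` and
all partials `∂_x^i ∂_y^j K`, `i, j ≤ 2`, are bounded by `1`, then
`|∂_x K| ≤ C d^{-γ/2}` and `|∂_x ∂_y K| ≤ C d^{-γ/4}` on `[0,1]²`, where `C = C(γ)`. -/
theorem correlation_decay_transfer (γ : ℝ) (hγ : 0 < γ) :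
    ∃ C : ℝ, 0 < C ∧
      ∀ (K : ℝ → ℝ → ℝ) (d : ℝ), 1 ≤ d →
        (∀ y : ℝ, ContDiff ℝ 2 (fun x => K x y)) →
        (∀ i : ℕ, i ≤ 2 → ∀ x : ℝ,
          ContDiff ℝ 2 (fun y => iteratedDeriv i (fun x' => K x' y) x)) →
        (∀ i j : ℕ, i ≤ 2 → j ≤ 2 → ∀ x ∈ Icc (0:ℝ) 1, ∀ y ∈ Icc (0:ℝ) 1,
          |mixedPartial K i j x y| ≤ 1) →
        (∀ x ∈ Icc (0:ℝ) 1, ∀ y ∈ Icc (0:ℝ) 1, |K x y| ≤ d ^ (-γ)) →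
        ∀ x ∈ Icc (0:ℝ) 1, ∀ y ∈ Icc (0:ℝ) 1,
          |mixedPartial K 1 0 x y| ≤ C * d ^ (-(γ / 2)) ∧
          |mixedPartial K 1 1 x y| ≤ C * d ^ (-(γ / 4)) := by
  refine ⟨7, by norm_num, fun K d hd hKx hKy hbdd hK x hx y hy => ?_⟩
  have hd0 : 0 < d := one_pos.trans_le hd
  have hpos : ∀ e : ℝ, 0 < d ^ e := fun e => Real.rpow_pos_of_pos hd0 e
  have hle_one : ∀ e : ℝ, e ≤ 0 → d ^ e ≤ 1 := fun e => Real.rpow_le_one_of_one_le_of_nonpos hd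
  have hdx : ∀ y ∈ Icc (0:ℝ) 1, ∀ x ∈ Icc (0:ℝ) 1,
      |deriv (fun x' => K x' y) x| ≤ 3 * d ^ (-(γ / 2)) := fun y hy x hx => by
    refine (abs_deriv_le_of_abs_le_mul_sq (hKx y) (hpos _)
      (by simpa using hle_one (-(γ / 2)) (by linarith)) (c := 1) (M := 1)
      (fun t ht => ?_) (fun t ht => ?_) hx).trans_eq (by ring)
    · simpa [rpow_neg_div_two_sq hd0.le] using hK t ht y hy
    · simpa [mixedPartial, iteratedDeriv_succ] using hbdd 2 0 le_rfl zero_le_two t ht y hy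
  have hdxy : |deriv (fun y' => deriv (fun x' => K x' y') x) y| ≤ 7 * d ^ (-(γ / 4)) := by
    refine (abs_deriv_le_of_abs_le_mul_sq (by simpa using hKy 1 one_le_two x) (hpos _)
      (by simpa using hle_one (-(γ / 4)) (by linarith)) (c := 3) (M := 1)
      (fun t ht => ?_) (fun t ht => ?_) hy).trans_eq (by ring)
    · rw [show γ / 4 = γ / 2 / 2 by ring, rpow_neg_div_two_sq hd0.le]
      simpa using hdx t ht x hx
    · simpa [mixedPartial, iteratedDeriv_succ] using hbdd 1 2 one_le_two le_rfl x hx t ht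
  refine ⟨?_, by simpa [mixedPartial] using hdxy⟩
  simpa [mixedPartial] using (hdx y hy x hx).trans (by linarith [hpos (-(γ / 2))])
end

section
/- Fix 0 < p₀ ≤ 1/2. There exist ε = ε(p₀) > 0 and c = c(p₀) > 0 with the following property. Let η₁, …, η_N be independent random variables on a probability space Ω with η_j ∈ {0,1}, P(η_j = 1) = p_j, and p₀ ≤ p_j ≤ 1 − p₀. Let S_N = ∑_j η_j. Then for any measurable Q : Ω → [0,1] with E[Q] ≥ 1 − ε and any m ∈ ℝ, one has E[(S_N − m)² Q] ≥ c N. -/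
/-!
Write `S_N - m = T + d` with `T = ∑ (η j - p j)` centered and `d` deterministic, and let
`V = ∑ p j (1 - p j) ≥ p₀² N`. Independence gives `E T² = V` and `E T⁴ ≤ V + 3 V²`, so
`E (T + d)⁴ ≤ K (E (T + d)²)²` with `K` depending only on `p₀`. Such a `Y = T + d` keeps a
quarter of its second moment under any weight `Q` with `E Q ≥ 1 - 1 / (2K)`: by AM-GM,
`y² (1 - q) ≤ y⁴ / (4t) + t (1 - q)` pointwise, and `t = K E Y² / 2` balances the two terms.
-/

open MeasureTheory ProbabilityTheory Set

variable {Ω : Type*} [MeasurableSpace Ω] {μ : Measure Ω}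

lemma MeasureTheory.MemLp.integrable_pow_of_le [IsFiniteMeasure μ] {f : Ω → ℝ} {n k : ℕ}
    (hf : MemLp f n μ) (hk : k ≤ n) : Integrable (fun ω ↦ f ω ^ k) μ :=
  (hf.mono_exponent (by exact_mod_cast hk)).integrable_norm_pow'.mono
    (hf.aestronglyMeasurable.pow k) (ae_of_all _ fun ω ↦ by simp)

theorem integral_finsetSum_eq_zero {ι : Type*} {X : ι → Ω → ℝ} (hX : ∀ i, Integrable (X i) μ)
    (hX0 : ∀ i, ∫ ω, X i ω ∂μ = 0) (s : Finset ι) : ∫ ω, ∑ i ∈ s, X i ω ∂μ = 0 := by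
  rw [integral_finsetSum s fun i _ ↦ hX i]
  simp [hX0]

namespace ProbabilityTheory

namespace IndepFun

variable {X Y : Ω → ℝ}

theorem integral_add_pow [IsFiniteMeasure μ] {n : ℕ} (hXY : IndepFun X Y μ) (hX : MemLp X n μ)
    (hY : MemLp Y n μ) :
    ∫ ω, (X ω + Y ω) ^ n ∂μ =
      ∑ k ∈ Finset.range (n + 1), (∫ ω, X ω ^ k ∂μ) * (∫ ω, Y ω ^ (n - k) ∂μ) * n.choose k := by
  have hind (k : ℕ) : IndepFun (fun ω ↦ X ω ^ k) (fun ω ↦ Y ω ^ (n - k)) μ :=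
    hXY.comp (measurable_id.pow_const k) (measurable_id.pow_const (n - k))
  have hint (k : ℕ) (hk : k ∈ Finset.range (n + 1)) :
      Integrable (fun ω ↦ X ω ^ k * Y ω ^ (n - k) * n.choose k) μ :=
    ((hind k).integrable_mul (hX.integrable_pow_of_le (Finset.mem_range_succ_iff.1 hk))
      (hY.integrable_pow_of_le (Nat.sub_le n k))).mul_const _
  simp_rw [add_pow]
  rw [integral_finsetSum _ hint]
  refine Finset.sum_congr rfl fun k _ ↦ ?_
  rw [integral_mul_const, (hind k).integral_fun_mul_eq_mul_integral
    (hX.aestronglyMeasurable.pow k) (hY.aestronglyMeasurable.pow _)]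

variable [IsProbabilityMeasure μ]

theorem integral_add_sq (hXY : IndepFun X Y μ) (hX : MemLp X 2 μ) (hY : MemLp Y 2 μ)
    (hX0 : ∫ ω, X ω ∂μ = 0) :
    ∫ ω, (X ω + Y ω) ^ 2 ∂μ = ∫ ω, X ω ^ 2 ∂μ + ∫ ω, Y ω ^ 2 ∂μ := by
  simp [hXY.integral_add_pow hX hY, Finset.sum_range_succ, hX0, add_comm]

theorem integral_add_pow_four (hXY : IndepFun X Y μ) (hX : MemLp X 4 μ) (hY : MemLp Y 4 μ)
    (hX0 : ∫ ω, X ω ∂μ = 0) (hY0 : ∫ ω, Y ω ∂μ = 0) :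
    ∫ ω, (X ω + Y ω) ^ 4 ∂μ =
      ∫ ω, X ω ^ 4 ∂μ + 6 * (∫ ω, X ω ^ 2 ∂μ) * (∫ ω, Y ω ^ 2 ∂μ) + ∫ ω, Y ω ^ 4 ∂μ := by
  simp [hXY.integral_add_pow hX hY, Finset.sum_range_succ, hX0, hY0, Nat.choose]
  ring

end IndepFun

variable [IsProbabilityMeasure μ]

theorem integral_add_const_pow_four_le {T : Ω → ℝ} (hT : MemLp T 4 μ) (d : ℝ) :
    ∫ ω, (T ω + d) ^ 4 ∂μ ≤ 8 * ∫ ω, T ω ^ 4 ∂μ + 8 * d ^ 4 := by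
  have hT4 := hT.integrable_pow_of_le le_rfl
  calc ∫ ω, (T ω + d) ^ 4 ∂μ ≤ ∫ ω, (8 * T ω ^ 4 + 8 * d ^ 4) ∂μ :=
        integral_mono ((hT.add (memLp_const d)).integrable_pow_of_le le_rfl)
          ((hT4.const_mul 8).add (integrable_const _))
          fun ω ↦ (Even.add_pow_le ⟨2, rfl⟩ : (T ω + d) ^ 4 ≤ 2 ^ 3 * _).trans_eq (by ring)
    _ = 8 * ∫ ω, T ω ^ 4 ∂μ + 8 * d ^ 4 := by
        rw [integral_add (hT4.const_mul 8) (integrable_const _), integral_const_mul]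
        simp

namespace iIndepFun

variable {ι : Type*} {X : ι → Ω → ℝ}

theorem integral_sum_sq (hX : iIndepFun X μ) (hX2 : ∀ i, MemLp (X i) 2 μ)
    (hX0 : ∀ i, ∫ ω, X i ω ∂μ = 0) (s : Finset ι) :
    ∫ ω, (∑ i ∈ s, X i ω) ^ 2 ∂μ = ∑ i ∈ s, ∫ ω, X i ω ^ 2 ∂μ := by
  classical
  induction s using Finset.induction_on with
  | empty => simp
  | insert a s ha ih =>
    have hind := hX.indepFun_finsetSum_of_notMem₀ (fun i ↦ (hX2 i).aemeasurable) ha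
    have hsum := hind.integral_add_sq (memLp_finsetSum' s fun i _ ↦ hX2 i) (hX2 a) (by
      simpa only [Finset.sum_apply] using
        integral_finsetSum_eq_zero (fun i ↦ (hX2 i).integrable one_le_two) hX0 s)
    simp only [Finset.sum_apply] at hsum
    simp only [Finset.sum_insert ha, add_comm (X a _), hsum, ih]
    ring

theorem integral_sum_pow_four_le (hX : iIndepFun X μ) (hX4 : ∀ i, MemLp (X i) 4 μ)
    (hX0 : ∀ i, ∫ ω, X i ω ∂μ = 0) (s : Finset ι) :
    ∫ ω, (∑ i ∈ s, X i ω) ^ 4 ∂μ ≤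
      ∑ i ∈ s, ∫ ω, X i ω ^ 4 ∂μ + 3 * (∑ i ∈ s, ∫ ω, X i ω ^ 2 ∂μ) ^ 2 := by
  classical
  induction s using Finset.induction_on with
  | empty => simp
  | insert a s ha ih =>
    have hind := hX.indepFun_finsetSum_of_notMem₀ (fun i ↦ (hX4 i).aemeasurable) ha
    have hsum := hind.integral_add_pow_four (memLp_finsetSum' s fun i _ ↦ hX4 i) (hX4 a) (by
      simpa only [Finset.sum_apply] using
        integral_finsetSum_eq_zero (fun i ↦ (hX4 i).integrable (by norm_num)) hX0 s) (hX0 a)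
    simp only [Finset.sum_apply] at hsum
    rw [hX.integral_sum_sq (fun i ↦ (hX4 i).mono_exponent (by norm_num)) hX0] at hsum
    have hσ : 0 ≤ ∫ ω, X a ω ^ 2 ∂μ := integral_nonneg fun ω ↦ sq_nonneg _
    have hV : 0 ≤ ∑ i ∈ s, ∫ ω, X i ω ^ 2 ∂μ :=
      Finset.sum_nonneg fun i _ ↦ integral_nonneg fun ω ↦ sq_nonneg _
    simp only [Finset.sum_insert ha, add_comm (X a _), hsum]
    nlinarith [mul_nonneg hσ hV, sq_nonneg (∫ ω, X a ω ^ 2 ∂μ)]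

theorem integral_sum_add_const_sq (hX : iIndepFun X μ) (hX2 : ∀ i, MemLp (X i) 2 μ)
    (hX0 : ∀ i, ∫ ω, X i ω ∂μ = 0) (s : Finset ι) (d : ℝ) :
    ∫ ω, (∑ i ∈ s, X i ω + d) ^ 2 ∂μ = ∑ i ∈ s, ∫ ω, X i ω ^ 2 ∂μ + d ^ 2 := by
  rw [(indepFun_const_right _ d).integral_add_sq (memLp_finsetSum s fun i _ ↦ hX2 i)
    (memLp_const d) (integral_finsetSum_eq_zero (fun i ↦ (hX2 i).integrable one_le_two) hX0 s),
    hX.integral_sum_sq hX2 hX0]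
  simp

theorem integral_sum_add_const_pow_four_le (hX : iIndepFun X μ) (hX4 : ∀ i, MemLp (X i) 4 μ)
    (hX0 : ∀ i, ∫ ω, X i ω ∂μ = 0) (hX42 : ∀ i, ∫ ω, X i ω ^ 4 ∂μ ≤ ∫ ω, X i ω ^ 2 ∂μ)
    {s : Finset ι} {v₀ : ℝ} (hv₀ : 0 < v₀) (hV : v₀ ≤ ∑ i ∈ s, ∫ ω, X i ω ^ 2 ∂μ) (d : ℝ) :
    ∫ ω, (∑ i ∈ s, X i ω + d) ^ 4 ∂μ ≤
      (24 + 8 / v₀) * (∫ ω, (∑ i ∈ s, X i ω + d) ^ 2 ∂μ) ^ 2 := by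
  rw [hX.integral_sum_add_const_sq (fun i ↦ (hX4 i).mono_exponent (by norm_num)) hX0]
  set V := ∑ i ∈ s, ∫ ω, X i ω ^ 2 ∂μ
  have h4 : ∫ ω, (∑ i ∈ s, X i ω) ^ 4 ∂μ ≤ V + 3 * V ^ 2 :=
    (hX.integral_sum_pow_four_le hX4 hX0 s).trans
      (by gcongr; exact Finset.sum_le_sum fun i _ ↦ hX42 i)
  have hVV : 8 * V ≤ 8 / v₀ * V ^ 2 := by
    rw [div_mul_eq_mul_div, le_div_iff₀ hv₀]; nlinarith
  calc _ ≤ 8 * ∫ ω, (∑ i ∈ s, X i ω) ^ 4 ∂μ + 8 * d ^ 4 :=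
        integral_add_const_pow_four_le (memLp_finsetSum s fun i _ ↦ hX4 i) d
    _ ≤ (24 + 8 / v₀) * V ^ 2 + 8 * d ^ 4 := by linarith
    _ ≤ (24 + 8 / v₀) * (V + d ^ 2) ^ 2 := by
        have : 0 ≤ (24 + 8 / v₀) * (2 * V * d ^ 2) + (16 + 8 / v₀) * d ^ 4 := by positivity
        linear_combination this

end iIndepFun

end ProbabilityTheory

lemma sq_sub_pow_four_div_sub_le_sq_mul {y q t : ℝ} (hq : q ∈ Icc (0 : ℝ) 1) (ht : 0 < t) :
    y ^ 2 - y ^ 4 / (4 * t) - t * (1 - q) ≤ y ^ 2 * q := by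
  have amgm : y ^ 2 ≤ y ^ 4 / (4 * t) + t := by
    rw [div_add' _ _ _ (by positivity), le_div_iff₀ (by positivity)]
    nlinarith [sq_nonneg (y ^ 2 - 2 * t)]
  have hquart : 0 ≤ y ^ 4 / (4 * t) := by positivity
  nlinarith [mul_le_mul_of_nonneg_right amgm (sub_nonneg.2 hq.2), mul_nonneg hquart hq.1]

section RobustSecondMoment

variable [IsProbabilityMeasure μ]

theorem integral_sq_sub_le_integral_sq_mul {Y Q : Ω → ℝ} (hY : MemLp Y 4 μ)
    (hQm : AEStronglyMeasurable Q μ) (hQ : ∀ ω, Q ω ∈ Icc (0 : ℝ) 1) {t : ℝ} (ht : 0 < t) :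
    ∫ ω, Y ω ^ 2 ∂μ - (∫ ω, Y ω ^ 4 ∂μ) / (4 * t) - t * (1 - ∫ ω, Q ω ∂μ) ≤
      ∫ ω, Y ω ^ 2 * Q ω ∂μ := by
  have hY2 := hY.integrable_pow_of_le (k := 2) (by norm_num)
  have hY4 := hY.integrable_pow_of_le (k := 4) le_rfl
  have hQb : ∀ᵐ ω ∂μ, ‖Q ω‖ ≤ 1 := ae_of_all _ fun ω ↦ by
    rw [Real.norm_eq_abs, abs_of_nonneg (hQ ω).1]; exact (hQ ω).2
  have hQi : Integrable Q μ := .of_bound hQm 1 hQb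
  have hY2Q : Integrable (fun ω ↦ Y ω ^ 2 * Q ω) μ := hY2.mul_bdd hQm hQb
  have hY24 : Integrable (fun ω ↦ Y ω ^ 2 - Y ω ^ 4 / (4 * t)) μ := hY2.sub (hY4.div_const _)
  have hQc : Integrable (fun ω ↦ t * (1 - Q ω)) μ := ((integrable_const 1).sub hQi).const_mul t
  calc _ = ∫ ω, (Y ω ^ 2 - Y ω ^ 4 / (4 * t) - t * (1 - Q ω)) ∂μ := by
        rw [integral_sub hY24 hQc, integral_sub hY2 (hY4.div_const _), integral_div,
          integral_const_mul, integral_sub (integrable_const 1) hQi]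
        simp
    _ ≤ _ := integral_mono (hY24.sub hQc) hY2Q fun ω ↦ sq_sub_pow_four_div_sub_le_sq_mul (hQ ω) ht

theorem integral_sq_div_four_le_integral_sq_mul {Y Q : Ω → ℝ} (hY : MemLp Y 4 μ)
    (hQm : AEStronglyMeasurable Q μ) (hQ : ∀ ω, Q ω ∈ Icc (0 : ℝ) 1) {K : ℝ} (hK : 0 < K)
    (hY4 : ∫ ω, Y ω ^ 4 ∂μ ≤ K * (∫ ω, Y ω ^ 2 ∂μ) ^ 2)
    (hQ1 : 1 - ∫ ω, Q ω ∂μ ≤ 1 / (2 * K)) :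
    (∫ ω, Y ω ^ 2 ∂μ) / 4 ≤ ∫ ω, Y ω ^ 2 * Q ω ∂μ := by
  set s := ∫ ω, Y ω ^ 2 ∂μ
  obtain hs | hs := eq_or_lt_of_le (show 0 ≤ s from integral_nonneg fun ω ↦ sq_nonneg (Y ω))
  · rw [← hs, zero_div]
    exact integral_nonneg fun ω ↦ mul_nonneg (sq_nonneg _) (hQ ω).1
  have ht : 0 < K * s / 2 := by positivity
  refine le_trans ?_ (integral_sq_sub_le_integral_sq_mul hY hQm hQ ht)
  have h4 : (∫ ω, Y ω ^ 4 ∂μ) / (4 * (K * s / 2)) ≤ s / 2 := by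
    rw [div_le_iff₀ (by positivity)]; nlinarith
  have hε : K * s / 2 * (1 - ∫ ω, Q ω ∂μ) ≤ s / 4 := by
    calc _ ≤ K * s / 2 * (1 / (2 * K)) := mul_le_mul_of_nonneg_left hQ1 ht.le
      _ = s / 4 := by field_simp; ring
  linarith

end RobustSecondMoment

section Bernoulli

open unitInterval

lemma ofReal_smul_dirac_add_eq_bernoulliMeasure {X : Type*} [MeasurableSpace X] (x y : X)
    {p : ℝ} (hp : p ∈ I) :
    ENNReal.ofReal p • Measure.dirac x + ENNReal.ofReal (1 - p) • Measure.dirac y =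
      bernoulliMeasure x y ⟨p, hp⟩ := by
  rw [bernoulliMeasure_def, ENNReal.smul_def, ENNReal.smul_def]
  congr <;> simp [ENNReal.ofReal, Real.toNNReal_of_nonneg hp.1, NNReal.eq_iff, hp.2]

variable {η : Ω → ℝ} {p : I}

lemma ae_eq_one_or_eq_zero_of_map_eq_bernoulliMeasure (hη : AEMeasurable η μ)
    (hlaw : μ.map η = bernoulliMeasure 1 0 p) : ∀ᵐ ω ∂μ, η ω = 1 ∨ η ω = 0 := by
  refine ae_of_ae_map (p := fun x ↦ x = 1 ∨ x = 0) hη ?_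
  rw [hlaw, ae_iff]
  simp only [not_or]
  exact bernoulliMeasure_apply_of_notMem_of_notMem p
    ((measurableSet_singleton 1).compl.inter (measurableSet_singleton 0).compl) (by simp) (by simp)

lemma integral_comp_of_map_eq_bernoulliMeasure (hη : AEMeasurable η μ)
    (hlaw : μ.map η = bernoulliMeasure 1 0 p) {f : ℝ → ℝ} (hf : Measurable f) :
    ∫ ω, f (η ω) ∂μ = p * f 1 + (1 - p) * f 0 := by
  rw [← integral_map hη hf.aestronglyMeasurable, hlaw, integral_bernoulliMeasure, smul_eq_mul,
    smul_eq_mul]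

lemma memLp_sub_of_map_eq_bernoulliMeasure [IsFiniteMeasure μ] (hη : AEMeasurable η μ)
    (hlaw : μ.map η = bernoulliMeasure 1 0 p) (q : ENNReal) :
    MemLp (fun ω ↦ η ω - p) q μ := by
  refine memLp_of_bounded (a := -1) (b := 1) ?_ (hη.sub_const _).aestronglyMeasurable q
  filter_upwards [ae_eq_one_or_eq_zero_of_map_eq_bernoulliMeasure hη hlaw] with ω hω
  rcases hω with h | h <;> simp only [h, mem_Icc] <;> constructor <;> linarith [p.2.1, p.2.2]

lemma integral_sub_of_map_eq_bernoulliMeasure (hη : AEMeasurable η μ)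
    (hlaw : μ.map η = bernoulliMeasure 1 0 p) : ∫ ω, (η ω - p) ∂μ = 0 := by
  rw [integral_comp_of_map_eq_bernoulliMeasure hη hlaw (f := fun x ↦ x - p) (by fun_prop)]
  ring

lemma integral_sub_sq_of_map_eq_bernoulliMeasure (hη : AEMeasurable η μ)
    (hlaw : μ.map η = bernoulliMeasure 1 0 p) :
    ∫ ω, (η ω - p) ^ 2 ∂μ = p * (1 - p) := by
  rw [integral_comp_of_map_eq_bernoulliMeasure hη hlaw (f := fun x ↦ (x - p) ^ 2) (by fun_prop)]
  ring

lemma integral_sub_pow_four_le_of_map_eq_bernoulliMeasure (hη : AEMeasurable η μ)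
    (hlaw : μ.map η = bernoulliMeasure 1 0 p) :
    ∫ ω, (η ω - p) ^ 4 ∂μ ≤ ∫ ω, (η ω - p) ^ 2 ∂μ := by
  rw [integral_sub_sq_of_map_eq_bernoulliMeasure hη hlaw,
    integral_comp_of_map_eq_bernoulliMeasure hη hlaw (f := fun x ↦ (x - p) ^ 4) (by fun_prop)]
  nlinarith [p.2.1, p.2.2, mul_nonneg p.2.1 (sub_nonneg.2 p.2.2)]

end Bernoulli

section BernoulliSum

lemma sq_mul_card_le_sum_mul_one_sub {ι : Type*} [Fintype ι] {p₀ : ℝ} {p : ι → ℝ} (hp₀ : 0 ≤ p₀)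
    (hp : ∀ j, p₀ ≤ p j ∧ p j ≤ 1 - p₀) : p₀ ^ 2 * Fintype.card ι ≤ ∑ j, p j * (1 - p j) := by
  have hpp j : p₀ ^ 2 ≤ p j * (1 - p j) :=
    (sq p₀).trans_le (mul_le_mul (hp j).1 (by linarith [(hp j).2]) hp₀ (hp₀.trans (hp j).1))
  simpa [mul_comm] using Finset.card_nsmul_le_sum Finset.univ _ _ fun j _ ↦ hpp j

variable [IsProbabilityMeasure μ] {ι : Type*} [Fintype ι] {η : ι → Ω → ℝ} {p : ι → unitInterval}

theorem integral_sum_sub_add_const_sq_of_bernoulli (hη : ∀ j, AEMeasurable (η j) μ)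
    (hind : iIndepFun η μ) (hlaw : ∀ j, μ.map (η j) = bernoulliMeasure 1 0 (p j)) (d : ℝ) :
    ∫ ω, (∑ j, (η j ω - p j) + d) ^ 2 ∂μ = ∑ j, (p j : ℝ) * (1 - p j) + d ^ 2 := by
  have hX : iIndepFun (fun j ω ↦ η j ω - p j) μ :=
    hind.comp _ fun j ↦ measurable_id.sub_const (p j : ℝ)
  rw [hX.integral_sum_add_const_sq (fun j ↦ memLp_sub_of_map_eq_bernoulliMeasure (hη j) (hlaw j) 2)
    (fun j ↦ integral_sub_of_map_eq_bernoulliMeasure (hη j) (hlaw j))]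
  simp only [integral_sub_sq_of_map_eq_bernoulliMeasure (hη _) (hlaw _)]

theorem integral_sum_sub_add_const_pow_four_le_of_bernoulli (hη : ∀ j, AEMeasurable (η j) μ)
    (hind : iIndepFun η μ) (hlaw : ∀ j, μ.map (η j) = bernoulliMeasure 1 0 (p j))
    {v₀ : ℝ} (hv₀ : 0 < v₀) (hv : v₀ ≤ ∑ j, (p j : ℝ) * (1 - p j)) (d : ℝ) :
    ∫ ω, (∑ j, (η j ω - p j) + d) ^ 4 ∂μ ≤
      (24 + 8 / v₀) * (∫ ω, (∑ j, (η j ω - p j) + d) ^ 2 ∂μ) ^ 2 := by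
  have hX : iIndepFun (fun j ω ↦ η j ω - p j) μ :=
    hind.comp _ fun j ↦ measurable_id.sub_const (p j : ℝ)
  refine hX.integral_sum_add_const_pow_four_le
    (fun j ↦ memLp_sub_of_map_eq_bernoulliMeasure (hη j) (hlaw j) 4)
    (fun j ↦ integral_sub_of_map_eq_bernoulliMeasure (hη j) (hlaw j))
    (fun j ↦ integral_sub_pow_four_le_of_map_eq_bernoulliMeasure (hη j) (hlaw j)) hv₀ ?_ d
  simpa only [integral_sub_sq_of_map_eq_bernoulliMeasure (hη _) (hlaw _)] using hv

end BernoulliSum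

theorem bernoulli_anticoncentration_general (p₀ : ℝ) (hp₀ : 0 < p₀) :
    ∃ ε : ℝ, 0 < ε ∧ ∃ c : ℝ, 0 < c ∧
      ∀ (N : ℕ) {Ω : Type} [MeasurableSpace Ω] (μ : Measure Ω) [IsProbabilityMeasure μ]
        (η : Fin N → Ω → ℝ) (p : Fin N → ℝ),
        (∀ j, Measurable (η j)) →
        iIndepFun η μ →
        (∀ j, p₀ ≤ p j ∧ p j ≤ 1 - p₀) →
        (∀ j, μ.map (η j) =
          ENNReal.ofReal (p j) • Measure.dirac (1 : ℝ) +
            ENNReal.ofReal (1 - p j) • Measure.dirac (0 : ℝ)) →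
        ∀ Q : Ω → ℝ, Measurable Q → (∀ ω, Q ω ∈ Icc (0:ℝ) 1) →
          1 - ε ≤ ∫ ω, Q ω ∂μ →
          ∀ m : ℝ, c * N ≤ ∫ ω, ((∑ j, η j ω) - m) ^ 2 * Q ω ∂μ := by
  set K := 24 + 8 / p₀ ^ 2
  have hK : 0 < K := by positivity
  refine ⟨1 / (2 * K), by positivity, p₀ ^ 2 / 4, by positivity, ?_⟩
  intro N Ω _ μ _ η p hη hind hp hmap Q hQm hQ hQ1 m
  obtain rfl | hN := N.eq_zero_or_pos
  · simpa using integral_nonneg fun ω ↦ mul_nonneg (sq_nonneg m) (hQ ω).1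
  have hpI (j : Fin N) : p j ∈ unitInterval := ⟨by linarith [(hp j).1], by linarith [(hp j).2]⟩
  set p' : Fin N → unitInterval := fun j ↦ ⟨p j, hpI j⟩
  have hη' j : AEMeasurable (η j) μ := (hη j).aemeasurable
  have hlaw j : μ.map (η j) = bernoulliMeasure 1 0 (p' j) :=
    (hmap j).trans (ofReal_smul_dirac_add_eq_bernoulliMeasure 1 0 (hpI j))
  have hV : p₀ ^ 2 * N ≤ ∑ j, (p' j : ℝ) * (1 - p' j) := by
    simpa using sq_mul_card_le_sum_mul_one_sub hp₀.le hp
  set d := ∑ j, p j - m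
  have hY (ω : Ω) : (∑ j, η j ω) - m = ∑ j, (η j ω - p' j) + d := by
    simp only [p', d, Finset.sum_sub_distrib]; ring
  calc p₀ ^ 2 / 4 * N ≤ (∑ j, (p' j : ℝ) * (1 - p' j) + d ^ 2) / 4 := by nlinarith [sq_nonneg d]
    _ = (∫ ω, (∑ j, (η j ω - p' j) + d) ^ 2 ∂μ) / 4 := by
        rw [integral_sum_sub_add_const_sq_of_bernoulli hη' hind hlaw]
    _ ≤ ∫ ω, (∑ j, (η j ω - p' j) + d) ^ 2 * Q ω ∂μ :=
        integral_sq_div_four_le_integral_sq_mul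
          ((memLp_finsetSum _ fun j _ ↦ memLp_sub_of_map_eq_bernoulliMeasure (hη' j) (hlaw j) 4).add
            (memLp_const d)) hQm.aestronglyMeasurable hQ hK
          (integral_sum_sub_add_const_pow_four_le_of_bernoulli hη' hind hlaw (by positivity)
            ((le_mul_of_one_le_right (by positivity) (by exact_mod_cast hN)).trans hV) d)
          (by linarith)
    _ = ∫ ω, ((∑ j, η j ω) - m) ^ 2 * Q ω ∂μ := by simp_rw [hY]

/-- **Anticoncentration of Bernoulli sums, robust under weights.** Fix `0 < p₀ ≤ 1/2`.
There are `ε = ε(p₀) > 0` and `c = c(p₀) > 0` such that for any independent random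
variables `η j ∈ {0,1}` with `P(η j = 1) = p j` and `p₀ ≤ p j ≤ 1 − p₀`, any measurable
`Q : Ω → [0,1]` with `E[Q] ≥ 1 − ε`, and any `m ∈ ℝ`, one has
`E[(S_N − m)² Q] ≥ c N` where `S_N = ∑ j, η j`. -/
theorem bernoulli_anticoncentration (p₀ : ℝ) (hp₀ : 0 < p₀) (hp₀' : p₀ ≤ 1 / 2) :
    ∃ ε : ℝ, 0 < ε ∧ ∃ c : ℝ, 0 < c ∧
      ∀ (N : ℕ) {Ω : Type} [MeasurableSpace Ω] (μ : Measure Ω) [IsProbabilityMeasure μ]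
        (η : Fin N → Ω → ℝ) (p : Fin N → ℝ),
        (∀ j, Measurable (η j)) →
        iIndepFun η μ →
        (∀ j, p₀ ≤ p j ∧ p j ≤ 1 - p₀) →
        (∀ j, μ.map (η j) =
          ENNReal.ofReal (p j) • Measure.dirac (1 : ℝ) +
            ENNReal.ofReal (1 - p j) • Measure.dirac (0 : ℝ)) →
        ∀ Q : Ω → ℝ, Measurable Q → (∀ ω, Q ω ∈ Icc (0:ℝ) 1) →
          1 - ε ≤ ∫ ω, Q ω ∂μ →
          ∀ m : ℝ, c * N ≤ ∫ ω, ((∑ j, η j ω) - m) ^ 2 * Q ω ∂μ :=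
  bernoulli_anticoncentration_general p₀ hp₀
end

section
/- Let X, X' ⊆ S² be two nonempty closed connected sets, each symmetric under the antipodal map x ↦ −x. Then X ∩ X' ≠ ∅. -/
/-!
Suppose `X ∩ X' = ∅` and pick `q ∈ X'`. Stereographic projection from `q` identifies `S²` with
`ℂ ∪ {∞}`, sending `q` to `∞`, `-q` to `0` and the antipodal map to `w ↦ -inversion 0 2 w`.
The open set `Ω = ℂ \ X'` avoids `0`, contains the connected set `X` and is antipodally
invariant, so a path in `Ω` from a point `w₀ ∈ X` to its antipode, followed by the antipodal image
of that path, is a loop in `Ω`. If `L` is the increment of a continuous logarithm along the first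
half, the second half contributes `-conj L`, so the loop winds `(L - conj L) / 2πi = Im L / π`
times around `0`; this is nonzero because `exp L = -4 / ‖w₀‖ ^ 2` is negative. But the winding
number around `z` is locally constant in `z` off the loop and vanishes near `∞`, so it is constant
on the connected set `X'`, which contains both `∞` and `0`.
-/

open Complex unitInterval Set Filter Topology Metric ComplexConjugate EuclideanGeometry OnePoint
  Module

noncomputable section

theorem Topology.IsInducing.isPreconnected_preimage {X Y : Type*} [TopologicalSpace X]
    [TopologicalSpace Y] {f : X → Y} (hf : IsInducing f) {s : Set Y} (hs : IsPreconnected s)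
    (hsf : s ⊆ range f) : IsPreconnected (f ⁻¹' s) :=
  hf.isPreconnected_image.mp (by rwa [image_preimage_eq_of_subset hsf])

theorem IsPreconnected.apply_eq_of_eventually_eq {X Y : Type*} [TopologicalSpace X] {f : X → Y}
    {s : Set X} (hs : IsPreconnected s) (hf : ∀ x ∈ s, ∀ᶠ y in 𝓝 x, f y = f x) {x y : X}
    (hx : x ∈ s) (hy : y ∈ s) : f x = f y := by
  have := Subtype.preconnectedSpace hs
  have : IsLocallyConstant (s.domRestrict f) := (IsLocallyConstant.iff_eventually_eq _).2
    fun x ↦ continuous_subtype_val.continuousAt.eventually (hf x x.2)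
  exact this.apply_eq_of_preconnectedSpace ⟨x, hx⟩ ⟨y, hy⟩

theorem EuclideanGeometry.inversion_zero {V : Type*} [NormedAddCommGroup V]
    [InnerProductSpace ℝ V] (R : ℝ) (x : V) : inversion (0 : V) R x = (R / ‖x‖) ^ 2 • x := by
  simp [inversion]

theorem EuclideanGeometry.inversion_zero_neg {V : Type*} [NormedAddCommGroup V]
    [InnerProductSpace ℝ V] (R : ℝ) (x : V) : inversion (0 : V) R (-x) = -inversion 0 R x := by
  simp [inversion_zero]

theorem EuclideanGeometry.involutive_neg_inversion_zero {V : Type*} [NormedAddCommGroup V]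
    [InnerProductSpace ℝ V] {R : ℝ} (hR : R ≠ 0) :
    Function.Involutive fun x : V ↦ -inversion 0 R x :=
  fun x ↦ by simp only [inversion_zero_neg, neg_neg, inversion_inversion (0 : V) hR]

namespace ContinuousMap

open scoped Classical in
/-- For a loop, `2πi` times its winding number around `0`. By uniqueness of lifts through `exp`
the choice of logarithm does not matter (`logIncrement_eq`). -/
def logIncrement (γ : C(I, ℂ)) : ℂ :=
  if h : ∃ g : C(I, ℂ), ∀ t, exp (g t) = γ t then h.choose 1 - h.choose 0 else 0

variable {γ f g : C(I, ℂ)}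

theorem exists_exp_eq (hγ : ∀ t, γ t ≠ 0) : ∃ g : C(I, ℂ), ∀ t, exp (g t) = γ t := by
  let γ' : C(I, {z : ℂ // z ≠ 0}) := ⟨fun t ↦ ⟨γ t, hγ t⟩, by fun_prop⟩
  obtain ⟨g, hg, -⟩ := isCoveringMap_exp.exists_path_lifts γ' (log (γ 0))
    (Subtype.ext (exp_log (hγ 0)).symm)
  exact ⟨g, fun t ↦ congrArg Subtype.val (congrFun hg t)⟩

theorem sub_eq_sub_of_exp_eq {g₁ g₂ : C(I, ℂ)} (he : ∀ t, exp (g₁ t) = exp (g₂ t)) :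
    g₁ 1 - g₁ 0 = g₂ 1 - g₂ 0 := by
  have hshift : ⇑(g₁ + const I (g₂ 0 - g₁ 0)) = g₂ := by
    refine isCoveringMap_exp.eq_of_comp_eq (by fun_prop) g₂.continuous (funext fun t ↦ ?_) 0 ?_
    · simp only [Function.comp_apply, Subtype.mk.injEq, add_apply, const_apply, exp_add,
        exp_sub, he]
      field_simp
    · simp
  have := congrFun hshift 1
  simp only [add_apply, const_apply] at this
  linear_combination this

theorem logIncrement_eq (g : C(I, ℂ)) (hg : ∀ t, exp (g t) = γ t) :
    logIncrement γ = g 1 - g 0 := by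
  have h : ∃ g : C(I, ℂ), ∀ t, exp (g t) = γ t := ⟨g, hg⟩
  rw [logIncrement, dif_pos h]
  exact sub_eq_sub_of_exp_eq fun t ↦ (h.choose_spec t).trans (hg t).symm

theorem exp_logIncrement (hγ : ∀ t, γ t ≠ 0) : exp (logIncrement γ) = γ 1 / γ 0 := by
  obtain ⟨g, hg⟩ := exists_exp_eq hγ
  rw [logIncrement_eq g hg, exp_sub, hg, hg]

@[simp]
theorem logIncrement_const (c : ℂ) : logIncrement (const I c) = 0 := by
  rcases eq_or_ne c 0 with rfl | hc
  · rw [logIncrement, dif_neg fun ⟨g, hg⟩ ↦ exp_ne_zero (g 0) (hg 0)]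
  · rw [logIncrement_eq (γ := const I c) (const I (log c)) fun _ ↦ exp_log hc, const_apply,
      const_apply, sub_self]

theorem logIncrement_mul (hf : ∀ t, f t ≠ 0) (hg : ∀ t, g t ≠ 0) :
    logIncrement (f * g) = logIncrement f + logIncrement g := by
  obtain ⟨F, hF⟩ := exists_exp_eq hf
  obtain ⟨G, hG⟩ := exists_exp_eq hg
  rw [logIncrement_eq (F + G) (by simp [exp_add, hF, hG]), logIncrement_eq F hF,
    logIncrement_eq G hG]
  simp only [add_apply]
  ring

theorem logIncrement_star (hf : ∀ t, f t ≠ 0) : logIncrement (star f) = conj (logIncrement f) := by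
  obtain ⟨F, hF⟩ := exists_exp_eq hf
  rw [logIncrement_eq (star F) fun t ↦ by
      rw [star_apply, star_apply, ← starRingEnd_apply, ← starRingEnd_apply, exp_conj, hF],
    logIncrement_eq F hF]
  simp only [star_apply, map_sub]; rfl

theorem logIncrement_eq_of_div_mem_slitPlane (hfg : ∀ t, f t / g t ∈ slitPlane) :
    logIncrement f = logIncrement g + log (f 1 / g 1) - log (f 0 / g 0) := by
  have hg : ∀ t, g t ≠ 0 := fun t h ↦ zero_notMem_slitPlane (by simpa [h] using hfg t)
  obtain ⟨G, hG⟩ := exists_exp_eq hg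
  let L : C(I, ℂ) := ⟨fun t ↦ log (f t / g t), (f.continuous.div g.continuous hg).clog hfg⟩
  rw [logIncrement_eq (G + L) fun t ↦ ?_, logIncrement_eq G hG]
  · simp only [add_apply, L, coe_mk]
    ring
  · simp [L, exp_add, hG, exp_log (slitPlane_ne_zero (hfg t)), mul_div_cancel₀ _ (hg t)]

theorem logIncrement_trans {a b c : ℂ} (γ₁ : Path a b) (γ₂ : Path b c)
    (h₁ : ∀ t, γ₁ t ≠ 0) (h₂ : ∀ t, γ₂ t ≠ 0) :
    logIncrement (γ₁.trans γ₂) = logIncrement γ₁ + logIncrement γ₂ := by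
  obtain ⟨G₁, hG₁⟩ := exists_exp_eq (γ := γ₁) h₁
  obtain ⟨G₂, hG₂⟩ := exists_exp_eq (γ := γ₂) h₂
  let Γ₁ : Path (G₁ 0) (G₁ 1) := ⟨G₁, rfl, rfl⟩
  let Γ₂ : Path (G₁ 1) (G₂ 1 + (G₁ 1 - G₂ 0)) := ⟨G₂ + const I (G₁ 1 - G₂ 0), by simp, by simp⟩
  have hb : exp (G₁ 1) = exp (G₂ 0) := by
    rw [hG₁, hG₂]; simp
  rw [logIncrement_eq (Γ₁.trans Γ₂) fun t ↦ ?_, logIncrement_eq G₁ hG₁, logIncrement_eq G₂ hG₂]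
  · simp only [ContinuousMap.coe_coe, Path.source, Path.target]
    ring
  · simp only [ContinuousMap.coe_coe, Path.trans_apply]
    split_ifs
    · exact hG₁ _
    · change exp (G₂ _ + (G₁ 1 - G₂ 0)) = _
      rw [exp_add, exp_sub, hb, div_self (exp_ne_zero _), mul_one, hG₂]
      rfl

theorem logIncrement_sub_const_eq_of_norm_sub_lt (hγ : γ 0 = γ 1) {z z' : ℂ}
    (hz : ∀ t, ‖z' - z‖ < ‖γ t - z‖) :
    logIncrement (γ - const I z') = logIncrement (γ - const I z) := by
  have hratio : ∀ t, (γ t - z') / (γ t - z) ∈ slitPlane := fun t ↦ by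
    have hne : γ t - z ≠ 0 := norm_pos_iff.mp ((norm_nonneg _).trans_lt (hz t))
    convert mem_slitPlane_of_norm_lt_one (z := (z - z') / (γ t - z)) ?_ using 1
    · field_simp; ring
    · rw [norm_div, div_lt_one (norm_pos_iff.mpr hne), norm_sub_rev]; exact hz t
  rw [logIncrement_eq_of_div_mem_slitPlane (g := γ - const I z) hratio]
  simp only [ContinuousMap.sub_apply, const_apply, hγ]
  ring

theorem logIncrement_sub_const_eq_zero (hγ : γ 0 = γ 1) {z : ℂ} (hz : ∀ t, ‖γ t‖ < ‖z‖) :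
    logIncrement (γ - const I z) = 0 := by
  have hratio : ∀ t, (γ t - z) / -z ∈ slitPlane := fun t ↦ by
    have hne : z ≠ 0 := norm_pos_iff.mp ((norm_nonneg _).trans_lt (hz t))
    convert mem_slitPlane_of_norm_lt_one (z := -(γ t / z)) ?_ using 1
    · field_simp; ring
    · rw [norm_neg, norm_div, div_lt_one (norm_pos_iff.mpr hne)]; exact hz t
  rw [logIncrement_eq_of_div_mem_slitPlane (g := const I (-z)) hratio]
  simp only [logIncrement_const, ContinuousMap.sub_apply, const_apply, hγ]
  ring

theorem eventually_logIncrement_sub_const_eq (hγ : γ 0 = γ 1) {z : ℂ} (hz : z ∉ range γ) :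
    ∀ᶠ z' in 𝓝 z, logIncrement (γ - const I z') = logIncrement (γ - const I z) := by
  have hK : IsCompact (range γ) := isCompact_range γ.continuous
  have hd : 0 < infDist z (range γ) :=
    (hK.isClosed.notMem_iff_infDist_pos (range_nonempty γ)).mp hz
  filter_upwards [ball_mem_nhds z hd] with z' hz'
  refine logIncrement_sub_const_eq_of_norm_sub_lt hγ fun t ↦ ?_
  rw [← dist_eq_norm, ← dist_eq_norm, dist_comm (γ t)]
  exact hz'.trans_le (infDist_le_dist_of_mem (mem_range_self t))

theorem eventually_logIncrement_sub_const_eq_zero (hγ : γ 0 = γ 1) :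
    ∀ᶠ z in cocompact ℂ, logIncrement (γ - const I z) = 0 := by
  obtain ⟨R, hR⟩ := (isCompact_range γ.continuous).isBounded.exists_norm_le
  filter_upwards [tendsto_norm_cocompact_atTop.eventually_gt_atTop R] with z hz
  exact logIncrement_sub_const_eq_zero hγ fun t ↦ (hR _ (mem_range_self t)).trans_lt hz

theorem logIncrement_trans_ne_zero {a b : ℂ} {r : ℝ} (hr : 0 < r) (p : Path a b) (q : Path b a)
    (hpq : ∀ t, q t * conj (p t) = -r) : logIncrement (p.trans q) ≠ 0 := by
  have hp : ∀ t, p t ≠ 0 := fun t h ↦ by simpa [h, hr.ne'] using hpq t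
  have hq : ∀ t, q t ≠ 0 := fun t h ↦ by simpa [h, hr.ne'] using hpq t
  have hqp : logIncrement q = -conj (logIncrement p) := by
    have := logIncrement_mul (f := q) (g := star (↑p : C(I, ℂ))) hq fun t ↦ by simpa using hp t
    rw [show (↑q : C(I, ℂ)) * star ↑p = const I (-(r : ℂ)) from ext hpq, logIncrement_const,
      logIncrement_star (f := ↑p) hp] at this
    linear_combination -this
  rw [logIncrement_trans p q hp hq, hqp]
  intro h
  -- `logIncrement p` would be real, yet its exponential `b / a = -r / normSq a` is negative.
  obtain ⟨x, hx⟩ := conj_eq_iff_real.mp (by linear_combination -h : conj (logIncrement p) = _)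
  have hexp : exp x * a = b := by
    have := exp_logIncrement (γ := ↑p) hp
    simp only [ContinuousMap.coe_coe, Path.source, Path.target] at this
    rw [← hx, this, div_mul_cancel₀ _ (p.source ▸ hp 0)]
  have := hpq 0
  rw [Path.source, Path.source, ← hexp, mul_assoc, mul_conj, ← ofReal_exp, ← ofReal_mul,
    ← ofReal_neg, ofReal_inj] at this
  nlinarith [Real.exp_pos x, normSq_nonneg a]

end ContinuousMap

open ContinuousMap (logIncrement const)

theorem exists_coe_apply_mem_of_logIncrement_ne_zero {γ : C(I, ℂ)} (hγ : γ 0 = γ 1) {z : ℂ}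
    (hz : logIncrement (γ - const I z) ≠ 0) {C : Set (OnePoint ℂ)} (hC : IsPreconnected C)
    (hinf : ∞ ∈ C) (hzC : (z : OnePoint ℂ) ∈ C) : ∃ t, (γ t : OnePoint ℂ) ∈ C := by
  by_contra! hγC
  let W : OnePoint ℂ → ℂ := fun x ↦ x.elim 0 fun z ↦ logIncrement (γ - const I z)
  refine hz (hC.apply_eq_of_eventually_eq (f := W) (fun x hx ↦ ?_) hzC hinf)
  induction x using OnePoint.rec with
  | infty =>
    rw [nhds_infty_eq, coclosedCompact_eq_cocompact]
    exact eventually_sup.2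
      ⟨eventually_map.2 (ContinuousMap.eventually_logIncrement_sub_const_eq_zero hγ),
        eventually_pure.2 rfl⟩
  | coe w =>
    rw [nhds_coe_eq]
    exact eventually_map.2 (ContinuousMap.eventually_logIncrement_sub_const_eq hγ
      fun ⟨t, ht⟩ ↦ hγC t (ht ▸ hx))

theorem exists_loop_logIncrement_ne_zero {R : ℝ} (hR : R ≠ 0) {Ω Y : Set ℂ} (hΩ : IsOpen Ω)
    (hΩ0 : 0 ∉ Ω) (hΩinv : ∀ w ∈ Ω, -inversion 0 R w ∈ Ω) (hY : IsPreconnected Y)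
    (hYΩ : Y ⊆ Ω) {w₀ : ℂ} (hw₀ : w₀ ∈ Y) (hw₀' : -inversion 0 R w₀ ∈ Y) :
    ∃ γ : Path w₀ w₀, (∀ t, γ t ∈ Ω) ∧ logIncrement γ ≠ 0 := by
  set A : ℂ → ℂ := fun w ↦ -inversion 0 R w
  have hAconj : ∀ w ∈ Ω, A w * conj w = -(R ^ 2 : ℝ) := fun w hw ↦ by
    have hw0 : (‖w‖ : ℂ) ≠ 0 := by exact_mod_cast norm_ne_zero_iff.mpr fun h ↦ hΩ0 (h ▸ hw)
    simp only [A, inversion_zero, neg_mul, real_smul, mul_assoc, mul_conj, normSq_eq_norm_sq]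
    push_cast
    field_simp
  have hjoin : JoinedIn Ω w₀ (A w₀) := by
    have hK := isConnected_connectedComponentIn_iff.mpr (hYΩ hw₀)
    have hYK := hY.subset_connectedComponentIn hw₀ hYΩ
    exact ((hΩ.connectedComponentIn.isConnected_iff_isPathConnected.mp hK).joinedIn _ (hYK hw₀)
      _ (hYK hw₀')).mono (connectedComponentIn_subset _ _)
  set p := hjoin.somePath
  have hpΩ : ∀ t, p t ∈ Ω := hjoin.somePath_mem
  have hAcont : ContinuousOn A (range p) :=
    (continuousOn_const.inversion continuousOn_const continuousOn_id
      fun _ hw h ↦ by obtain ⟨t, rfl⟩ := hw; exact hΩ0 (h ▸ hpΩ t)).neg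
  set q : Path (A w₀) w₀ := (p.map' hAcont).cast rfl (involutive_neg_inversion_zero hR w₀).symm
  refine ⟨p.trans q, fun t ↦ ?_, ContinuousMap.logIncrement_trans_ne_zero (sq_pos_of_ne_zero hR) p q
    fun t ↦ hAconj _ (hpΩ t)⟩
  rw [Path.trans_apply]
  split_ifs
  exacts [hpΩ _, hΩinv _ (hpΩ _)]

theorem exists_coe_mem_of_neg_inversion_mem {R : ℝ} (hR : R ≠ 0) {Y : Set ℂ}
    {C : Set (OnePoint ℂ)} (hY : IsPreconnected Y) (hYne : Y.Nonempty)
    (hYinv : ∀ w ∈ Y, -inversion 0 R w ∈ Y) (hC : IsPreconnected C) (hCcl : IsClosed C)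
    (hinf : ∞ ∈ C) (h0 : ((0 : ℂ) : OnePoint ℂ) ∈ C)
    (hCinv : ∀ w : ℂ, (w : OnePoint ℂ) ∈ C → ((-inversion 0 R w : ℂ) : OnePoint ℂ) ∈ C) :
    ∃ w ∈ Y, (w : OnePoint ℂ) ∈ C := by
  by_contra! hYC
  obtain ⟨w₀, hw₀⟩ := hYne
  have hΩinv : ∀ w : ℂ, (w : OnePoint ℂ) ∉ C → ((-inversion 0 R w : ℂ) : OnePoint ℂ) ∉ C :=
    fun w hw h ↦ involutive_neg_inversion_zero hR w ▸ hw <| hCinv _ h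
  obtain ⟨γ, hγ, hγ0⟩ := exists_loop_logIncrement_ne_zero hR (Ω := {w | (w : OnePoint ℂ) ∉ C})
    (hCcl.isOpen_compl.preimage continuous_coe) (fun h ↦ h h0) hΩinv hY hYC hw₀ (hYinv w₀ hw₀)
  obtain ⟨t, ht⟩ := exists_coe_apply_mem_of_logIncrement_ne_zero (γ := ↑γ) (z := 0)
    (γ.source.trans γ.target.symm) (by simpa using hγ0) hC hinf h0
  exact hγ t ht

section Stereographic

variable {E : Type*} [NormedAddCommGroup E] [InnerProductSpace ℝ E] {v : E}

theorem stereoInvFun_neg_inversion (hv : ‖v‖ = 1) {w : (ℝ ∙ v)ᗮ} (hw : w ≠ 0) :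
    (stereoInvFun hv (-inversion 0 2 w) : E) = -stereoInvFun hv w := by
  have hn : ‖w‖ ≠ 0 := norm_ne_zero_iff.mpr hw
  simp only [stereoInvFun_apply, inversion_zero, norm_neg, norm_smul, Submodule.coe_neg,
    Submodule.coe_smul, Real.norm_eq_abs, abs_of_nonneg (sq_nonneg (2 / ‖w‖))]
  match_scalars <;> field_simp <;> ring

variable [FiniteDimensional ℝ E] {F : Type*} [NormedAddCommGroup F] [InnerProductSpace ℝ F]

def onePointHomeoSphere (hv : ‖v‖ = 1) (ι : (ℝ ∙ v)ᗮ ≃ₗᵢ[ℝ] F) :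
    OnePoint F ≃ₜ sphere (0 : E) 1 :=
  ι.toHomeomorph.symm.onePointCongr.trans (onePointHyperplaneHomeoUnitSphere hv)

variable (hv : ‖v‖ = 1) (ι : (ℝ ∙ v)ᗮ ≃ₗᵢ[ℝ] F)

@[simp]
theorem onePointHomeoSphere_infty : (onePointHomeoSphere hv ι ∞ : E) = v := rfl

theorem onePointHomeoSphere_coe (w : F) :
    (onePointHomeoSphere hv ι w : E) = stereoInvFun hv (ι.symm w) := rfl

@[simp]
theorem onePointHomeoSphere_coe_zero : (onePointHomeoSphere hv ι (0 : F) : E) = -v := by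
  simp [onePointHomeoSphere_coe, stereoInvFun_apply]

theorem onePointHomeoSphere_coe_neg_inversion {w : F} (hw : w ≠ 0) :
    (onePointHomeoSphere hv ι (-inversion 0 2 w : F) : E) = -onePointHomeoSphere hv ι w := by
  have hw' : ι.symm w ≠ 0 := by simpa using hw
  rw [onePointHomeoSphere_coe, onePointHomeoSphere_coe, ← stereoInvFun_neg_inversion hv hw']
  simp [inversion_zero]

theorem exists_onePointHomeoSphere_coe_eq {x : E} (hx : x ∈ sphere (0 : E) 1) (hxv : x ≠ v) :
    ∃ w : F, (onePointHomeoSphere hv ι w : E) = x := by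
  obtain ⟨y, hy⟩ := (onePointHomeoSphere hv ι).surjective ⟨x, hx⟩
  induction y using OnePoint.rec with
  | infty => exact absurd (congrArg Subtype.val hy) (Ne.symm hxv)
  | coe w => exact ⟨w, congrArg Subtype.val hy⟩

theorem onePointHomeoSphere_coe_neg_inversion_mem {S : Set E} (hS : ∀ x ∈ S, -x ∈ S) {w : F}
    (hw : (onePointHomeoSphere hv ι w : E) ∈ S) :
    (onePointHomeoSphere hv ι (-inversion 0 2 w : F) : E) ∈ S := by
  rcases eq_or_ne w 0 with rfl | hw0
  · simpa using hw
  · rw [onePointHomeoSphere_coe_neg_inversion hv ι hw0]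
    exact hS _ hw

end Stereographic

theorem symmetric_connected_sets_intersect_general
    (X X' : Set (EuclideanSpace ℝ (Fin 3)))
    (hXsub : X ⊆ sphere (0 : EuclideanSpace ℝ (Fin 3)) 1)
    (hX'sub : X' ⊆ sphere (0 : EuclideanSpace ℝ (Fin 3)) 1)
    (hX'cl : IsClosed X')
    (hXconn : IsConnected X) (hX'conn : IsConnected X')
    (hXsym : ∀ x ∈ X, -x ∈ X) (hX'sym : ∀ x ∈ X', -x ∈ X') :
    (X ∩ X').Nonempty := by
  by_contra hXX'
  obtain ⟨q, hq⟩ := hX'conn.nonempty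
  have hq1 : ‖q‖ = 1 := by simpa using hX'sub hq
  have : Fact (finrank ℝ (EuclideanSpace ℝ (Fin 3)) = 2 + 1) := ⟨finrank_euclideanSpace_fin⟩
  set e := onePointHomeoSphere hq1 ((OrthonormalBasis.fromOrthogonalSpanSingleton 2
    (ne_zero_of_norm_ne_zero (hq1 ▸ one_ne_zero))).repr.trans orthonormalBasisOneI.repr.symm)
  have he : IsEmbedding fun x ↦ (e x : EuclideanSpace ℝ (Fin 3)) :=
    IsEmbedding.subtypeVal.comp e.isEmbedding
  have hXe : X ⊆ range fun w : ℂ ↦ (e w : EuclideanSpace ℝ (Fin 3)) := fun x hx ↦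
    exists_onePointHomeoSphere_coe_eq hq1 _ (hXsub hx) fun h ↦ hXX' ⟨x, hx, h ▸ hq⟩
  have hX'e : X' ⊆ range fun x ↦ (e x : EuclideanSpace ℝ (Fin 3)) := by
    rwa [← Function.comp_def, range_comp, e.surjective.range_eq, image_univ, Subtype.range_val]
  obtain ⟨x₀, hx₀⟩ := hXconn.nonempty
  obtain ⟨w₀, hw₀⟩ := hXe hx₀
  obtain ⟨w, hwX, hwX'⟩ := exists_coe_mem_of_neg_inversion_mem two_ne_zero
    (Y := {w : ℂ | (e w : EuclideanSpace ℝ (Fin 3)) ∈ X})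
    (C := {x | (e x : EuclideanSpace ℝ (Fin 3)) ∈ X'})
    ((he.comp isOpenEmbedding_coe.isEmbedding).isInducing.isPreconnected_preimage
      hXconn.isPreconnected hXe)
    ⟨w₀, by simpa [← hw₀] using hx₀⟩
    (fun w hw ↦ onePointHomeoSphere_coe_neg_inversion_mem hq1 _ hXsym hw)
    (he.isInducing.isPreconnected_preimage hX'conn.isPreconnected hX'e)
    (hX'cl.preimage he.continuous) (by simpa [e] using hq) (by simpa [e] using hX'sym q hq)
    (fun w hw ↦ onePointHomeoSphere_coe_neg_inversion_mem hq1 _ hX'sym hw)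
  exact hXX' ⟨_, hwX, hwX'⟩

/-- **Antipodally symmetric connected sets on `S²` intersect.** If `X, X' ⊆ S²` are
nonempty closed connected sets, each symmetric under the antipodal map `x ↦ −x`,
then `X ∩ X' ≠ ∅`. -/
theorem symmetric_connected_sets_intersect
    (X X' : Set (EuclideanSpace ℝ (Fin 3)))
    (hXsub : X ⊆ sphere (0 : EuclideanSpace ℝ (Fin 3)) 1)
    (hX'sub : X' ⊆ sphere (0 : EuclideanSpace ℝ (Fin 3)) 1)
    (hXcl : IsClosed X) (hX'cl : IsClosed X')
    (hXconn : IsConnected X) (hX'conn : IsConnected X')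
    (hXsym : ∀ x ∈ X, -x ∈ X) (hX'sym : ∀ x ∈ X', -x ∈ X') :
    (X ∩ X').Nonempty :=
  symmetric_connected_sets_intersect_general X X' hXsub hX'sub hX'cl hXconn hX'conn hXsym hX'sym
end
end

section
/- Let H be a real (or complex) Hilbert space and let {J(z)}_{z ∈ Z} be a finite collection of unit vectors in H whose pairwise inner products satisfy |⟨J(z), J(z')⟩| ≤ δ for z ≠ z', with (|Z| − 1)δ < τ² for some 0 < τ ≤ 1. Suppose H contains a subspace orthogonal to span{J(z)} of dimension at least |Z|. Then there exists an orthonormal collection {J̃(z)}_{z ∈ Z} in H with ‖J̃(z) − J(z)‖ ≤ 2τ for every z ∈ Z. -/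
/-!
Let `Γ` be the matrix with `τ²` on the diagonal and `-⟪J z, J z'⟫` off it. Since the
off-diagonal row sums are at most `(|Z| - 1)δ < τ²`, Gershgorin's theorem makes `Γ` positive
semidefinite, so it is the Gram matrix of a family `I` in the orthogonal subspace `K`. The
vectors `J z + I z` then have Gram matrix `(1 + τ²) • 1`, and normalising them moves each
`J z` by `‖(1 + τ²)^(-1/2) • (J z + I z) - J z‖² = 2 - 2 (1 + τ²)^(-1/2) ≤ 2τ²`.
-/

open Matrix Finset
open scoped ComplexOrder MatrixOrder InnerProductSpace

theorem Matrix.IsHermitian.posSemidef_of_sum_norm_offDiag_le {𝕜 n : Type*} [RCLike 𝕜]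
    [Fintype n] [DecidableEq n] {A : Matrix n n 𝕜} (hA : A.IsHermitian)
    (h : ∀ i, ∑ j ∈ univ.erase i, ‖A i j‖ ≤ RCLike.re (A i i)) : A.PosSemidef := by
  refine hA.posSemidef_iff_eigenvalues_nonneg.mpr fun i => ?_
  have hμ : Module.End.HasEigenvalue (toLin' A) (hA.eigenvalues i : 𝕜) := by
    refine Module.End.hasEigenvalue_of_hasEigenvector (x := ⇑(hA.eigenvectorBasis i)) ⟨?_, ?_⟩
    · rw [Module.End.mem_eigenspace_iff, toLin'_apply, hA.mulVec_eigenvectorBasis,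
        RCLike.real_smul_eq_coe_smul (K := 𝕜)]
    · simpa using hA.eigenvectorBasis.orthonormal.ne_zero i
  obtain ⟨k, hk⟩ := eigenvalue_mem_ball hμ
  rw [Metric.mem_closedBall, ← hA.coe_re_apply_self, dist_eq_norm, ← RCLike.ofReal_sub,
    RCLike.norm_ofReal] at hk
  have hdist := (abs_le.mp hk).1
  have hrow := h k
  show 0 ≤ hA.eigenvalues i
  linarith

theorem exists_orthonormal_of_card_le_rank {𝕜 E ι : Type*} [RCLike 𝕜] [NormedAddCommGroup E]
    [InnerProductSpace 𝕜 E] [Fintype ι] (h : (Fintype.card ι : Cardinal) ≤ Module.rank 𝕜 E) :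
    ∃ e : ι → E, Orthonormal 𝕜 e := by
  obtain ⟨f, hf⟩ := exists_linearIndependent_of_le_rank h
  exact ⟨InnerProductSpace.gramSchmidtNormed 𝕜 f ∘ Fintype.equivFin ι,
    (InnerProductSpace.gramSchmidtNormed_orthonormal hf).comp _ (Fintype.equivFin ι).injective⟩

theorem Matrix.PosSemidef.exists_gram_eq {𝕜 E n : Type*} [RCLike 𝕜] [NormedAddCommGroup E]
    [InnerProductSpace 𝕜 E] [Fintype n] {Γ : Matrix n n 𝕜} (hΓ : Γ.PosSemidef) {e : n → E}
    (he : Orthonormal 𝕜 e) : ∃ v : n → E, gram 𝕜 v = Γ := by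
  classical
  obtain ⟨B, rfl⟩ := CStarAlgebra.nonneg_iff_eq_star_mul_self.mp hΓ.nonneg
  refine ⟨fun i => ∑ k, B k i • e k, ?_⟩
  ext i j
  simp [gram_apply, sum_inner, inner_sum, inner_smul_left, inner_smul_right,
    orthonormal_iff_ite.mp he, Matrix.mul_apply, mul_comm]

theorem orthonormal_smul_add_of_gram_add_eq_smul_one {𝕜 E ι : Type*} [RCLike 𝕜]
    [NormedAddCommGroup E] [InnerProductSpace 𝕜 E] [DecidableEq ι] {J I : ι → E}
    (hIJ : ∀ i j, ⟪I i, J j⟫_𝕜 = 0) {s : ℝ} (hs : s ≠ 0)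
    (h : gram 𝕜 J + gram 𝕜 I = ((s : 𝕜) ^ 2) • 1) :
    Orthonormal 𝕜 fun i => (s⁻¹ : 𝕜) • (J i + I i) := by
  rw [orthonormal_iff_ite]
  intro i j
  have hij := congrFun₂ h i j
  simp only [Matrix.add_apply, gram_apply, Matrix.smul_apply, one_apply, smul_eq_mul, mul_ite,
    mul_one, mul_zero] at hij
  rw [inner_smul_left, inner_smul_right, inner_add_left, inner_add_right, inner_add_right,
    hIJ, inner_eq_zero_symm.mp (hIJ j i), add_zero, zero_add, hij]
  split_ifs
  · have : (s : 𝕜) ≠ 0 := RCLike.ofReal_ne_zero.mpr hs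
    simp only [map_inv₀, RCLike.conj_ofReal]
    field_simp
  · simp

theorem norm_inv_sqrt_smul_add_sub_le {E : Type*} [NormedAddCommGroup E] [InnerProductSpace ℝ E]
    {u v : E} {t : ℝ} (hu : ‖u‖ = 1) (hv : ‖v‖ = t) (huv : ⟪u, v⟫_ℝ = 0) (ht : 0 ≤ t) :
    ‖(√(1 + t ^ 2))⁻¹ • (u + v) - u‖ ≤ 2 * t := by
  set s := √(1 + t ^ 2)
  have hs2 : s ^ 2 = 1 + t ^ 2 := Real.sq_sqrt (by positivity)
  have hs1 : 1 ≤ s := Real.one_le_sqrt.mpr (by nlinarith)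
  have hnorm : ‖u + v‖ = s := by
    rw [← Real.sqrt_sq (norm_nonneg _), norm_add_sq_real, hu, hv, huv]
    norm_num
    rfl
  have hinner : ⟪s⁻¹ • (u + v), u⟫_ℝ = s⁻¹ := by
    rw [real_inner_smul_left, inner_add_left, real_inner_self_eq_norm_sq, hu,
      real_inner_comm, huv]
    ring
  have hsq : ‖s⁻¹ • (u + v) - u‖ ^ 2 = 2 - 2 * s⁻¹ := by
    rw [norm_sub_sq_real, norm_smul, hnorm, hinner, hu, Real.norm_eq_abs,
      abs_of_pos (by positivity), inv_mul_cancel₀ (by positivity)]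
    ring
  refine le_of_sq_le_sq ?_ (by positivity)
  rw [hsq]
  have : s⁻¹ * s = 1 := inv_mul_cancel₀ (by positivity)
  nlinarith [inv_pos.mpr (show 0 < s by positivity)]


section Correction

variable {H Z : Type*} [NormedAddCommGroup H] [InnerProductSpace ℝ H] [DecidableEq Z]

def correctionGram (J : Z → H) (τ : ℝ) : Matrix Z Z ℝ :=
  of fun z z' => if z = z' then τ ^ 2 else -⟪J z, J z'⟫_ℝ

theorem posSemidef_correctionGram [Fintype Z] {J : Z → H} {δ τ : ℝ}
    (hpair : ∀ z z', z ≠ z' → |⟪J z, J z'⟫_ℝ| ≤ δ)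
    (hsmall : ((Fintype.card Z : ℝ) - 1) * δ ≤ τ ^ 2) :
    (correctionGram J τ).PosSemidef := by
  refine IsHermitian.posSemidef_of_sum_norm_offDiag_le ?_ fun z => ?_
  · ext z z'
    by_cases h : z = z' <;> simp [correctionGram, h, Ne.symm, real_inner_comm]
  calc ∑ z' ∈ univ.erase z, ‖correctionGram J τ z z'‖ ≤ ∑ z' ∈ univ.erase z, δ :=
        sum_le_sum fun z' hz' => by
          simpa [correctionGram, (ne_of_mem_erase hz').symm]
            using hpair z z' (ne_of_mem_erase hz').symm
    _ = ((Fintype.card Z : ℝ) - 1) * δ := by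
        rw [sum_const, card_erase_of_mem (mem_univ z), card_univ, nsmul_eq_mul,
          Nat.cast_pred (Fintype.card_pos_iff.mpr ⟨z⟩)]
    _ ≤ RCLike.re (correctionGram J τ z z) := by simpa [correctionGram] using hsmall

theorem gram_add_correctionGram {J : Z → H} (hunit : ∀ z, ‖J z‖ = 1) (τ : ℝ) :
    gram ℝ J + correctionGram J τ = (1 + τ ^ 2) • 1 := by
  ext z z'
  by_cases h : z = z' <;> simp [correctionGram, gram_apply, h, hunit]

end Correction

theorem almost_orthonormal_correction_general
    {H : Type*} [NormedAddCommGroup H] [InnerProductSpace ℝ H]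
    {Z : Type*} [Fintype Z] (J : Z → H) (δ τ : ℝ)
    (hunit : ∀ z, ‖J z‖ = 1)
    (hpair : ∀ z z', z ≠ z' → |(inner ℝ (J z) (J z') : ℝ)| ≤ δ)
    (hτ : 0 < τ)
    (hsmall : ((Fintype.card Z : ℝ) - 1) * δ < τ ^ 2)
    (hdim : ∃ K : Submodule ℝ H,
      (∀ v ∈ K, ∀ z, (inner ℝ v (J z) : ℝ) = 0) ∧
      (Fintype.card Z : Cardinal) ≤ Module.rank ℝ K) :
    ∃ J' : Z → H, Orthonormal ℝ J' ∧ ∀ z, ‖J' z - J z‖ ≤ 2 * τ := by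
  classical
  obtain ⟨K, hKJ, hK⟩ := hdim
  obtain ⟨e, he⟩ := exists_orthonormal_of_card_le_rank hK
  obtain ⟨I, hI⟩ := (posSemidef_correctionGram hpair hsmall.le).exists_gram_eq he
  have hIJ : ∀ z z', ⟪(I z : H), J z'⟫_ℝ = 0 := fun z z' => hKJ _ (I z).2 z'
  have hgramI : gram ℝ (fun z => (I z : H)) = correctionGram J τ := hI
  have hIz : ∀ z, ‖(I z : H)‖ = τ := fun z => by
    rw [← sq_eq_sq₀ (norm_nonneg _) hτ.le, ← real_inner_self_eq_norm_sq]
    simpa [correctionGram] using congrFun₂ hgramI z z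
  have hgram : gram ℝ J + gram ℝ (fun z => (I z : H)) = ((√(1 + τ ^ 2) : ℝ) ^ 2) • 1 := by
    rw [hgramI, gram_add_correctionGram hunit, Real.sq_sqrt (by positivity)]
  refine ⟨_, orthonormal_smul_add_of_gram_add_eq_smul_one hIJ (by positivity) hgram,
    fun z => ?_⟩
  exact norm_inv_sqrt_smul_add_sub_le (hunit z) (hIz z) (inner_eq_zero_symm.mp (hIJ z z)) hτ.le

/-- **Quantitative orthonormalization of an almost-orthonormal system.** Let `H` be a
real Hilbert space and `J : Z → H` a finite family of unit vectors with pairwise inner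
products bounded by `δ`, where `(|Z| − 1)δ < τ²` for some `0 < τ ≤ 1`. If `H` contains
a subspace orthogonal to all the `J z` of dimension at least `|Z|`, then there is an
orthonormal family `J' : Z → H` with `‖J' z − J z‖ ≤ 2τ` for every `z`. -/
theorem almost_orthonormal_correction
    {H : Type*} [NormedAddCommGroup H] [InnerProductSpace ℝ H] [CompleteSpace H]
    {Z : Type*} [Fintype Z] (J : Z → H) (δ τ : ℝ)
    (hunit : ∀ z, ‖J z‖ = 1)
    (hδ : 0 ≤ δ)
    (hpair : ∀ z z', z ≠ z' → |(inner ℝ (J z) (J z') : ℝ)| ≤ δ)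
    (hτ : 0 < τ) (hτ1 : τ ≤ 1)
    (hsmall : ((Fintype.card Z : ℝ) - 1) * δ < τ ^ 2)
    (hdim : ∃ K : Submodule ℝ H,
      (∀ v ∈ K, ∀ z, (inner ℝ v (J z) : ℝ) = 0) ∧
      (Fintype.card Z : Cardinal) ≤ Module.rank ℝ K) :
    ∃ J' : Z → H, Orthonormal ℝ J' ∧ ∀ z, ‖J' z - J z‖ ≤ 2 * τ :=
  almost_orthonormal_correction_general J δ τ hunit hpair hτ hsmall hdim
end

section
/- Let ρ be a finite positive Borel measure on ℝ and ν a positive measure with ν ≤ ρ (i.e., ν(B) ≤ ρ(B) for all Borel sets B). Then for every S > 0, ∫_{−S}^{S} (1 − |s|/S) |ν̂(s)|² ds ≤ ∫_{−S}^{S} (1 − |s|/S) |ρ̂(s)|² ds, where μ̂(s) = ∫ e^{isξ} dμ(ξ). -/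
/-!
Expanding `|μ̂(s)|² = ∬ cos (s (λ - η)) dμ(λ) dμ(η)` and swapping the integrals turns the
Fejér-weighted integral into `∬ K_S(λ - η) d(μ ⊗ μ)`, where `K_S`, the Fourier transform of the
triangle `(1 - |s| / S)₊`, equals `2 (1 - cos (S t)) / (S t²) ≥ 0`. A nonnegative integrand has
an integral that is monotone in the measure, and `ν ⊗ ν ≤ ρ ⊗ ρ`.
-/

open MeasureTheory Set Complex

theorem intervalIntegral.integral_neg_self_eq_two_mul_of_even {f : ℝ → ℝ} (hf : Continuous f)
    (heven : ∀ x, f (-x) = f x) (a : ℝ) :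
    ∫ x in -a..a, f x = 2 * ∫ x in 0..a, f x := by
  have hleft : ∫ x in -a..0, f x = ∫ x in 0..a, f x := by
    simpa [heven] using (intervalIntegral.integral_comp_neg (a := 0) (b := a) f).symm
  rw [← intervalIntegral.integral_add_adjacent_intervals (hf.intervalIntegrable _ 0)
    (hf.intervalIntegrable 0 a), hleft, two_mul]

lemma one_sub_abs_div_mem_Icc {S s : ℝ} (hS : 0 < S) (hs : s ∈ Icc (-S) S) :
    1 - |s| / S ∈ Icc 0 1 := by
  have : |s| / S ≤ 1 := (div_le_one hS).2 (abs_le.2 hs)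
  constructor <;> [linarith; linarith [div_nonneg (abs_nonneg s) hS.le]]

lemma abs_one_sub_abs_div_mul_cos_le_one {S s : ℝ} (hS : 0 < S) (hs : s ∈ Icc (-S) S) (x : ℝ) :
    |(1 - |s| / S) * Real.cos x| ≤ 1 := by
  obtain ⟨h0, h1⟩ := one_sub_abs_div_mem_Icc hS hs
  rw [abs_mul, abs_of_nonneg h0]
  exact mul_le_one₀ h1 (abs_nonneg _) (Real.abs_cos_le_one x)

noncomputable def fejerKernel (S t : ℝ) : ℝ :=
  ∫ s in Icc (-S) S, (1 - |s| / S) * Real.cos (s * t)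

lemma fejerKernel_eq_of_ne_zero {S t : ℝ} (hS : 0 < S) (ht : t ≠ 0) :
    fejerKernel S t = 2 * (1 - Real.cos (S * t)) / (S * t ^ 2) := by
  have hF : ∀ x, HasDerivAt
      (fun x => (1 - x / S) * (Real.sin (x * t) / t) - Real.cos (x * t) / (S * t ^ 2))
      ((1 - x / S) * Real.cos (x * t)) x := by
    intro x
    have hlin : HasDerivAt (fun x : ℝ => x * t) t x := by
      simpa using (hasDerivAt_id x).mul_const t
    have hw : HasDerivAt (fun x : ℝ => 1 - x / S) (-(1 / S)) x := by
      simpa using ((hasDerivAt_id x).div_const S).const_sub 1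
    refine ((hw.mul (hlin.sin.div_const t)).sub (hlin.cos.div_const (S * t ^ 2))).congr_deriv ?_
    field_simp
    ring
  have hhalf : ∫ s in (0)..S, (1 - |s| / S) * Real.cos (s * t)
      = ∫ s in (0)..S, (1 - s / S) * Real.cos (s * t) :=
    intervalIntegral.integral_congr fun s hs => by
      rw [uIcc_of_le hS.le] at hs
      simp only [abs_of_nonneg hs.1]
  rw [fejerKernel, integral_Icc_eq_integral_Ioc, ← intervalIntegral.integral_of_le (by linarith),
    intervalIntegral.integral_neg_self_eq_two_mul_of_even (by fun_prop)
      (fun s => by rw [abs_neg, neg_mul, Real.cos_neg]),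
    hhalf, intervalIntegral.integral_eq_sub_of_hasDerivAt (fun x _ => hF x)
      (Continuous.intervalIntegrable (by fun_prop) _ _)]
  simp only [zero_mul, zero_div, sub_zero, div_self hS.ne', sub_self, Real.sin_zero,
    Real.cos_zero]
  field_simp
  ring

lemma fejerKernel_nonneg {S : ℝ} (hS : 0 < S) (t : ℝ) : 0 ≤ fejerKernel S t := by
  rcases eq_or_ne t 0 with rfl | ht
  · exact setIntegral_nonneg measurableSet_Icc fun s hs => by
      simpa using (one_sub_abs_div_mem_Icc hS hs).1
  · rw [fejerKernel_eq_of_ne_zero hS ht]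
    have := Real.cos_le_one (S * t)
    positivity

lemma continuous_fejerKernel (S : ℝ) : Continuous (fejerKernel S) :=
  continuous_parametric_integral_of_continuous (by fun_prop) isCompact_Icc

lemma abs_fejerKernel_le {S : ℝ} (hS : 0 < S) (t : ℝ) : |fejerKernel S t| ≤ 2 * S := by
  have := norm_setIntegral_le_of_norm_le_const (μ := volume)
    (f := fun s => (1 - |s| / S) * Real.cos (s * t))
    measure_Icc_lt_top fun s hs => abs_one_sub_abs_div_mul_cos_le_one hS hs (s * t)
  rw [Real.volume_real_Icc, max_eq_left (by linarith)] at this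
  rw [fejerKernel, ← Real.norm_eq_abs]
  linarith

lemma norm_integral_exp_sq_eq_integral_cos (μ : Measure ℝ) [IsFiniteMeasure μ] (s : ℝ) :
    ‖∫ ξ, exp (I * s * ξ) ∂μ‖ ^ 2 = ∫ p : ℝ × ℝ, Real.cos (s * (p.1 - p.2)) ∂(μ.prod μ) := by
  set z := ∫ ξ, exp (I * s * ξ) ∂μ
  have hconj : (starRingEnd ℂ) z = ∫ ξ, exp (-(I * s * ξ)) ∂μ := by
    rw [← integral_conj]
    congr 1 with ξ
    rw [← Complex.exp_conj]
    simp
  have hprod : z * (starRingEnd ℂ) z = ∫ p : ℝ × ℝ, exp ((s * (p.1 - p.2) : ℝ) * I) ∂(μ.prod μ) := by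
    rw [hconj, ← integral_prod_mul]
    congr 1 with p
    rw [← Complex.exp_add]
    push_cast
    ring_nf
  have hint : Integrable (fun p : ℝ × ℝ => exp ((s * (p.1 - p.2) : ℝ) * I)) (μ.prod μ) :=
    .of_bound (by fun_prop) 1 (ae_of_all _ fun p => (norm_exp_ofReal_mul_I _).le)
  calc ‖z‖ ^ 2 = (z * (starRingEnd ℂ) z).re := by rw [mul_conj']; norm_cast
    _ = ∫ p : ℝ × ℝ, Real.cos (s * (p.1 - p.2)) ∂(μ.prod μ) := by
      rw [hprod, ← RCLike.re_to_complex, ← integral_re hint]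
      simp only [RCLike.re_to_complex, exp_ofReal_mul_I_re]

lemma integral_fejer_mul_norm_sq_eq_integral_fejerKernel (μ : Measure ℝ) [IsFiniteMeasure μ]
    {S : ℝ} (hS : 0 < S) :
    ∫ s in Icc (-S) S, (1 - |s| / S) * ‖∫ ξ, exp (I * s * ξ) ∂μ‖ ^ 2
      = ∫ p : ℝ × ℝ, fejerKernel S (p.1 - p.2) ∂(μ.prod μ) := by
  have hint : Integrable (Function.uncurry fun s (p : ℝ × ℝ) =>
      (1 - |s| / S) * Real.cos (s * (p.1 - p.2))) ((volume.restrict (Icc (-S) S)).prod (μ.prod μ)) :=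
    .of_bound (by fun_prop) 1 <| (Measure.quasiMeasurePreserving_fst.ae
      (ae_restrict_mem measurableSet_Icc)).mono fun q hq =>
        abs_one_sub_abs_div_mul_cos_le_one hS hq _
  simp_rw [norm_integral_exp_sq_eq_integral_cos, ← integral_const_mul]
  exact integral_integral_swap hint

theorem fejer_weighted_monotone_general
    (ρ ν : Measure ℝ) [IsFiniteMeasure ρ]
    (hle : ν ≤ ρ) (S : ℝ) (hS : 0 < S) :
    ∫ s in Icc (-S) S,
        (1 - |s| / S) * ‖∫ ξ, Complex.exp (Complex.I * s * ξ) ∂ν‖ ^ 2 ≤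
      ∫ s in Icc (-S) S,
        (1 - |s| / S) * ‖∫ ξ, Complex.exp (Complex.I * s * ξ) ∂ρ‖ ^ 2 := by
  have : IsFiniteMeasure ν := isFiniteMeasure_of_le ρ hle
  rw [integral_fejer_mul_norm_sq_eq_integral_fejerKernel ν hS,
    integral_fejer_mul_norm_sq_eq_integral_fejerKernel ρ hS]
  exact integral_mono_measure (Measure.prod_mono hle hle)
    (ae_of_all _ fun p => fejerKernel_nonneg hS _)
    (.of_bound ((continuous_fejerKernel S).comp (by fun_prop)).aestronglyMeasurable (2 * S)
      (ae_of_all _ fun p => abs_fejerKernel_le hS _))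

/-- **Monotonicity of the Fejér-weighted `L²` norm of the Fourier transform** under
restriction of measures: if `ν ≤ ρ` are finite positive measures on `ℝ`, then for every
`S > 0`, `∫_{−S}^{S} (1 − |s|/S)|ν̂(s)|² ds ≤ ∫_{−S}^{S} (1 − |s|/S)|ρ̂(s)|² ds`. -/
theorem fejer_weighted_monotone
    (ρ ν : Measure ℝ) [IsFiniteMeasure ρ] [IsFiniteMeasure ν]
    (hle : ν ≤ ρ) (S : ℝ) (hS : 0 < S) :
    ∫ s in Icc (-S) S,
        (1 - |s| / S) * ‖∫ ξ, Complex.exp (Complex.I * s * ξ) ∂ν‖ ^ 2 ≤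
      ∫ s in Icc (-S) S,
        (1 - |s| / S) * ‖∫ ξ, Complex.exp (Complex.I * s * ξ) ∂ρ‖ ^ 2 :=
  fejer_weighted_monotone_general ρ ν hle S hS
end

section
/- For real numbers a₁, a₂, b₁, b₂ and parameters 0 < δ ≤ δ₀ and B > 0, define p(ξ) = (a₁ + a₂ ξ/δ) + (b₁ + b₂ ξ/δ) e^{iξ} for ξ ∈ [−B, B]. Then there exists a constant c(B, δ₀) > 0 such that max_{ξ ∈ [−B,B]} |p(ξ)| ≥ c(B, δ₀) · (|a₁| + |a₂| + |b₁| + |b₂|). -/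
/-!
Instead of compactness, an explicit two-point argument: put `t = min B 1` and `w = e^{it}`,
so `Im w = sin t > 0`. With real `x, y`, the real and imaginary parts of `x + y w` recover
`x` and `y`. Now `p(t)` and `conj p(-t)` are `(α ± β) + (γ ± η) w` with `α = a₁`,
`β = a₂ t / δ`, `γ = b₁`, `η = b₂ t / δ`, so half their sum and difference bound
`|α| + |β| + |γ| + |η|` by `max (|p t|, |p (-t)|)`; undoing the scaling costs a factor
`max 1 (δ₀ / t)`.
-/

open Set Complex

theorem abs_add_abs_le_mul_norm_of_im_pos {x y : ℝ} {w : ℂ} (hw : 0 < w.im) (hre : |w.re| ≤ 1) :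
    |x| + |y| ≤ (1 + 2 / w.im) * ‖(x : ℂ) + y * w‖ := by
  set z : ℂ := x + y * w
  have him : |y| * w.im ≤ ‖z‖ := by
    simpa [z, abs_mul, abs_of_pos hw] using abs_im_le_norm z
  have hx : |x| ≤ ‖z‖ + |y| := by
    have hz : x = z.re - y * w.re := by simp [z]
    calc |x| ≤ |z.re| + |y| * |w.re| := by rw [hz, ← abs_mul]; exact abs_sub _ _
      _ ≤ ‖z‖ + |y| * 1 := by gcongr; exact abs_re_le_norm z
      _ = ‖z‖ + |y| := by ring
  have hy : |y| ≤ ‖z‖ / w.im := by rwa [le_div_iff₀ hw]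
  calc |x| + |y| ≤ ‖z‖ + 2 * (‖z‖ / w.im) := by linarith
    _ = (1 + 2 / w.im) * ‖z‖ := by ring

theorem sum_abs_le_mul_max_norm_of_im_pos {α β γ η : ℝ} {w : ℂ} (hw : 0 < w.im)
    (hre : |w.re| ≤ 1) :
    |α| + |β| + |γ| + |η| ≤ 2 * (1 + 2 / w.im) *
      max ‖((α + β : ℝ) : ℂ) + (γ + η : ℝ) * w‖ ‖((α - β : ℝ) : ℂ) + (γ - η : ℝ) * w‖ := by
  set z₁ : ℂ := ((α + β : ℝ) : ℂ) + (γ + η : ℝ) * w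
  set z₂ : ℂ := ((α - β : ℝ) : ℂ) + (γ - η : ℝ) * w
  have hsum : ‖(α : ℂ) + γ * w‖ ≤ max ‖z₁‖ ‖z₂‖ := by
    have : (α : ℂ) + γ * w = (z₁ + z₂) / 2 := by simp only [z₁, z₂]; push_cast; ring
    rw [this, norm_div, Complex.norm_two, div_le_iff₀ two_pos]
    linarith [norm_add_le z₁ z₂, le_max_left ‖z₁‖ ‖z₂‖, le_max_right ‖z₁‖ ‖z₂‖]
  have hdiff : ‖(β : ℂ) + η * w‖ ≤ max ‖z₁‖ ‖z₂‖ := by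
    have : (β : ℂ) + η * w = (z₁ - z₂) / 2 := by simp only [z₁, z₂]; push_cast; ring
    rw [this, norm_div, Complex.norm_two, div_le_iff₀ two_pos]
    linarith [norm_sub_le z₁ z₂, le_max_left ‖z₁‖ ‖z₂‖, le_max_right ‖z₁‖ ‖z₂‖]
  have hK : 0 ≤ 1 + 2 / w.im := by positivity
  linarith [abs_add_abs_le_mul_norm_of_im_pos (x := α) (y := γ) hw hre,
    abs_add_abs_le_mul_norm_of_im_pos (x := β) (y := η) hw hre,
    mul_le_mul_of_nonneg_left hsum hK, mul_le_mul_of_nonneg_left hdiff hK]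

noncomputable def expSum (a₁ a₂ b₁ b₂ δ ξ : ℝ) : ℂ :=
  ((a₁ + a₂ * ξ / δ : ℝ) : ℂ) + ((b₁ + b₂ * ξ / δ : ℝ) : ℂ) * exp (I * ξ)

theorem norm_expSum_neg (a₁ a₂ b₁ b₂ δ ξ : ℝ) :
    ‖expSum a₁ a₂ b₁ b₂ δ (-ξ)‖ =
      ‖((a₁ - a₂ * ξ / δ : ℝ) : ℂ) + ((b₁ - b₂ * ξ / δ : ℝ) : ℂ) * exp (I * ξ)‖ := by
  rw [← Complex.norm_conj, expSum, map_add, map_mul, ← Complex.exp_conj]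
  simp only [conj_ofReal, map_mul, conj_I]
  push_cast
  ring_nf

theorem abs_le_max_one_div_mul_abs_mul_div {a δ t : ℝ} (hδ : 0 < δ) (ht : 0 < t) :
    |a| ≤ max 1 (δ / t) * |a * t / δ| := by
  calc |a| = δ / t * |a * t / δ| := by
        rw [abs_div, abs_mul, abs_of_pos ht, abs_of_pos hδ]; field_simp
    _ ≤ max 1 (δ / t) * |a * t / δ| := by gcongr; exact le_max_right _ _

theorem sum_abs_le_mul_max_norm_expSum {a₁ a₂ b₁ b₂ δ t : ℝ} (hδ : 0 < δ) (ht : 0 < t)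
    (hsin : 0 < Real.sin t) :
    |a₁| + |a₂| + |b₁| + |b₂| ≤ max 1 (δ / t) * (2 * (1 + 2 / Real.sin t)) *
      max ‖expSum a₁ a₂ b₁ b₂ δ t‖ ‖expSum a₁ a₂ b₁ b₂ δ (-t)‖ := by
  have him : (exp (I * t)).im = Real.sin t := by rw [mul_comm]; exact exp_ofReal_mul_I_im t
  have hre : |(exp (I * t)).re| ≤ 1 := by
    rw [mul_comm, exp_ofReal_mul_I_re]; exact Real.abs_cos_le_one t
  have htwo := sum_abs_le_mul_max_norm_of_im_pos (α := a₁) (β := a₂ * t / δ) (γ := b₁)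
    (η := b₂ * t / δ) (him ▸ hsin) hre
  rw [him] at htwo
  have hscale : |a₁| + |a₂| + |b₁| + |b₂| ≤
      max 1 (δ / t) * (|a₁| + |a₂ * t / δ| + |b₁| + |b₂ * t / δ|) := by
    have h1 : (1 : ℝ) ≤ max 1 (δ / t) := le_max_left _ _
    nlinarith [abs_le_max_one_div_mul_abs_mul_div (a := a₂) hδ ht,
      abs_le_max_one_div_mul_abs_mul_div (a := b₂) hδ ht, abs_nonneg a₁, abs_nonneg b₁]
  rw [mul_assoc, norm_expSum_neg]
  exact hscale.trans (mul_le_mul_of_nonneg_left htwo (by positivity))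

theorem exp_sum_compactness_lower_bound_general (B δ₀ : ℝ) (hB : 0 < B) :
    ∃ c : ℝ, 0 < c ∧
      ∀ (a₁ a₂ b₁ b₂ : ℝ) (δ : ℝ), 0 < δ → δ ≤ δ₀ →
        ∃ ξ ∈ Icc (-B) B,
          c * (|a₁| + |a₂| + |b₁| + |b₂|) ≤
            ‖((a₁ + a₂ * ξ / δ : ℝ) : ℂ) +
              ((b₁ + b₂ * ξ / δ : ℝ) : ℂ) * Complex.exp (Complex.I * ξ)‖ := by
  set t := min B 1
  have ht : 0 < t := lt_min hB one_pos
  have htB : t ≤ B := min_le_left B 1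
  have hsin : 0 < Real.sin t :=
    Real.sin_pos_of_pos_of_lt_pi ht ((min_le_right B 1).trans_lt (by linarith [Real.pi_gt_three]))
  set K := max 1 (δ₀ / t) * (2 * (1 + 2 / Real.sin t))
  have hK : 0 < K := by positivity
  refine ⟨K⁻¹, inv_pos.mpr hK, fun a₁ a₂ b₁ b₂ δ hδ hδδ₀ => ?_⟩
  have hbound : |a₁| + |a₂| + |b₁| + |b₂| ≤
      K * max ‖expSum a₁ a₂ b₁ b₂ δ t‖ ‖expSum a₁ a₂ b₁ b₂ δ (-t)‖ := by
    refine (sum_abs_le_mul_max_norm_expSum hδ ht hsin).trans ?_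
    unfold K
    gcongr
  obtain ⟨ξ, hξ, hmax⟩ : ∃ ξ ∈ Icc (-B) B,
      max ‖expSum a₁ a₂ b₁ b₂ δ t‖ ‖expSum a₁ a₂ b₁ b₂ δ (-t)‖ = ‖expSum a₁ a₂ b₁ b₂ δ ξ‖ := by
    rcases max_choice ‖expSum a₁ a₂ b₁ b₂ δ t‖ ‖expSum a₁ a₂ b₁ b₂ δ (-t)‖ with h | h
    · exact ⟨t, ⟨by linarith, htB⟩, h⟩
    · exact ⟨-t, ⟨by linarith, by linarith⟩, h⟩
  refine ⟨ξ, hξ, ?_⟩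
  rw [inv_mul_le_iff₀ hK]
  exact hmax ▸ hbound

/-- **Compactness lower bound for exponential sums of degree 4.** For `B > 0` and
`δ₀ > 0` there is `c = c(B, δ₀) > 0` such that for all real coefficients
`a₁, a₂, b₁, b₂` and every `0 < δ ≤ δ₀`, the function
`p(ξ) = (a₁ + a₂ ξ/δ) + (b₁ + b₂ ξ/δ) e^{iξ}` satisfies
`max_{ξ ∈ [−B,B]} |p(ξ)| ≥ c (|a₁| + |a₂| + |b₁| + |b₂|)`. -/
theorem exp_sum_compactness_lower_bound (B δ₀ : ℝ) (hB : 0 < B) (hδ₀ : 0 < δ₀) :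
    ∃ c : ℝ, 0 < c ∧
      ∀ (a₁ a₂ b₁ b₂ : ℝ) (δ : ℝ), 0 < δ → δ ≤ δ₀ →
        ∃ ξ ∈ Icc (-B) B,
          c * (|a₁| + |a₂| + |b₁| + |b₂|) ≤
            ‖((a₁ + a₂ * ξ / δ : ℝ) : ℂ) +
              ((b₁ + b₂ * ξ / δ : ℝ) : ℂ) * Complex.exp (Complex.I * ξ)‖ :=
  exp_sum_compactness_lower_bound_general B δ₀ hB
end
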